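/- arXiv:cs/0702065 — 11 statements merged into one kernel-verified Lean document; each statement's English description precedes it below -/
import Mathlib

section
/- Let U ⊆ ℝ be an open set and y : ℝ → ℝ a twice differentiable function on U with y(x) ≠ 0 for all x ∈ U, satisfying the second-order ODE y''(x) = -y(x)^3·y'(x)^4 - y'(x)^2/y(x) - y(x)/2 on U. Then the function ȳ := y²/2 satisfies the Rayleigh equation ȳ''(x) + ȳ'(x)^4 + ȳ(x) = 0 on U. -/
/-! By the chain rule `ȳ' = y y'` and `ȳ'' = y'² + y y''`, and the equation gives
`y y'' = -y⁴y'⁴ - y'² - y²/2`, whose three terms cancel `(ȳ')⁴`, `y'²` and `ȳ` respectively. -/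

open Filter Topology

theorem deriv_sq_div_two {y : ℝ → ℝ} {x : ℝ} (hy : DifferentiableAt ℝ y x) :
    deriv (fun t => y t ^ 2 / 2) x = y x * deriv y x := by
  rw [deriv_div_const, deriv_fun_pow hy]
  ring

theorem deriv_deriv_sq_div_two {y : ℝ → ℝ} {x : ℝ} (hy : ∀ᶠ z in 𝓝 x, DifferentiableAt ℝ y z)
    (hy' : DifferentiableAt ℝ (deriv y) x) :
    deriv (deriv (fun t => y t ^ 2 / 2)) x = deriv y x ^ 2 + y x * deriv (deriv y) x := by
  have hfirst : deriv (fun t => y t ^ 2 / 2) =ᶠ[𝓝 x] fun z => y z * deriv y z :=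
    hy.mono fun z hz => deriv_sq_div_two hz
  rw [hfirst.deriv_eq, deriv_fun_mul hy.self_of_nhds hy']
  ring

theorem rayleigh_pullback_identity {y y' : ℝ} (hy : y ≠ 0) :
    (y' ^ 2 + y * (-y ^ 3 * y' ^ 4 - y' ^ 2 / y - y / 2)) + (y * y') ^ 4 + y ^ 2 / 2 = 0 := by
  field_simp
  ring

/-- If `y` is twice differentiable on an open set `U`, nonvanishing there,
and satisfies `y'' = -y^3 (y')^4 - (y')^2 / y - y/2` on `U`, then `ȳ := y^2/2`
satisfies the Rayleigh equation `ȳ'' + (ȳ')^4 + ȳ = 0` on `U`. -/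
theorem statement0 (U : Set ℝ) (hU : IsOpen U) (y : ℝ → ℝ)
    (hy1 : ∀ x ∈ U, DifferentiableAt ℝ y x)
    (hy2 : ∀ x ∈ U, DifferentiableAt ℝ (deriv y) x)
    (hy0 : ∀ x ∈ U, y x ≠ 0)
    (hode : ∀ x ∈ U, deriv (deriv y) x =
      -(y x)^3 * (deriv y x)^4 - (deriv y x)^2 / y x - y x / 2) :
    ∀ x ∈ U,
      deriv (deriv (fun t => (y t)^2 / 2)) x
        + (deriv (fun t => (y t)^2 / 2) x)^4 + (y x)^2 / 2 = 0 := by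
  intro x hx
  have hy1_near : ∀ᶠ z in 𝓝 x, DifferentiableAt ℝ y z :=
    eventually_of_mem (hU.mem_nhds hx) hy1
  rw [deriv_deriv_sq_div_two hy1_near (hy2 x hx), deriv_sq_div_two (hy1 x hx), hode x hx]
  exact rayleigh_pullback_identity (hy0 x hx)
end

section
/- Let U ⊆ ℝ be an open set with 0 ∉ U and y : ℝ → ℝ twice differentiable on U, satisfying y''(x) = (6·x·y(x)² + 1 - 2·x⁴·y'(x))/x⁵ on U. Then the function ȳ defined by ȳ(t) := y(1/t) is twice differentiable on V := {1/x : x ∈ U} and satisfies the first Painlevé equation ȳ''(t) = 6·ȳ(t)² + t on V. -/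
/-!
Since inversion is an involution, `y = ȳ ∘ inv`, so `ȳ` is differentiable exactly where `y` is
and the chain rule gives `ȳ'(t) = -t⁻² y'(1/t)` at every `t ≠ 0` (where `y` is not
differentiable, both sides are the junk value `0`). Differentiating once more,
`ȳ''(t) = t⁻⁴ y''(1/t) + 2 t⁻³ y'(1/t)`, and substituting the equation for `y''` at `x = 1/t`
the `y'` terms cancel, leaving `6 ȳ(t)² + t`.
-/

open Filter Topology

section CompInv

variable {𝕜 F : Type*} [NontriviallyNormedField 𝕜] [NormedAddCommGroup F] [NormedSpace 𝕜 F]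
  {f : 𝕜 → F} {x : 𝕜}

theorem differentiableAt_comp_inv_iff (hx : x ≠ 0) :
    DifferentiableAt 𝕜 (fun u => f u⁻¹) x ↔ DifferentiableAt 𝕜 f x⁻¹ := by
  refine ⟨fun h => ?_, fun h => h.comp x (differentiableAt_inv hx)⟩
  rw [← inv_inv x] at h
  simpa [Function.comp_def] using h.comp x⁻¹ (differentiableAt_inv (inv_ne_zero hx))

variable (f) in
theorem deriv_comp_inv (hx : x ≠ 0) :
    deriv (fun u => f u⁻¹) x = -(x ^ 2)⁻¹ • deriv f x⁻¹ := by
  by_cases hf : DifferentiableAt 𝕜 f x⁻¹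
  · exact (hf.hasDerivAt.scomp x (hasDerivAt_inv hx)).deriv
  · rw [deriv_zero_of_not_differentiableAt hf, smul_zero,
      deriv_zero_of_not_differentiableAt (mt (differentiableAt_comp_inv_iff hx).mp hf)]

theorem hasDerivAt_deriv_comp_inv (hf : DifferentiableAt 𝕜 (deriv f) x⁻¹) (hx : x ≠ 0) :
    HasDerivAt (deriv fun u => f u⁻¹)
      ((x ^ 4)⁻¹ • deriv (deriv f) x⁻¹ + (2 * (x ^ 3)⁻¹) • deriv f x⁻¹) x := by
  have hderiv : deriv (fun u => f u⁻¹) =ᶠ[𝓝 x] fun u => -(u ^ 2)⁻¹ • deriv f u⁻¹ :=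
    eventually_ne_nhds hx |>.mono fun u hu => deriv_comp_inv f hu
  have hcoeff : HasDerivAt (fun u : 𝕜 => -(u ^ 2)⁻¹) (2 * (x ^ 3)⁻¹) x := by
    refine ((hasDerivAt_pow 2 x).inv (pow_ne_zero 2 hx)).neg.congr_deriv ?_
    field_simp
    norm_num
    ring
  have hprod := hcoeff.smul (hf.hasDerivAt.scomp x (hasDerivAt_inv hx))
  refine (hprod.congr_of_eventuallyEq hderiv).congr_deriv ?_
  rw [smul_smul]
  congr 2
  ring

end CompInv

theorem statement1_general (U : Set ℝ) (h0 : (0:ℝ) ∉ U) (y : ℝ → ℝ)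
    (hy1 : ∀ x ∈ U, DifferentiableAt ℝ y x)
    (hy2 : ∀ x ∈ U, DifferentiableAt ℝ (deriv y) x)
    (hode : ∀ x ∈ U, deriv (deriv y) x =
      (6 * x * (y x)^2 + 1 - 2 * x^4 * deriv y x) / x^5) :
    ∀ t ∈ (fun x : ℝ => 1 / x) '' U,
      DifferentiableAt ℝ (fun s => y (1 / s)) t ∧
      DifferentiableAt ℝ (deriv (fun s => y (1 / s))) t ∧
      deriv (deriv (fun s => y (1 / s))) t = 6 * (y (1 / t))^2 + t := by
  rintro _ ⟨x, hxU, rfl⟩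
  have hx : x ≠ 0 := ne_of_mem_of_not_mem hxU h0
  have hx' : x⁻¹ ≠ 0 := inv_ne_zero hx
  have hy2' : DifferentiableAt ℝ (deriv y) x⁻¹⁻¹ := by rw [inv_inv]; exact hy2 x hxU
  have hbar := hasDerivAt_deriv_comp_inv hy2' hx'
  simp only [one_div, inv_inv, smul_eq_mul] at hbar ⊢
  refine ⟨(differentiableAt_comp_inv_iff hx').mpr ?_, hbar.differentiableAt, ?_⟩
  · rw [inv_inv]; exact hy1 x hxU
  · rw [hbar.deriv, hode x hxU]
    field_simp
    ring

/-- If `y` is twice differentiable on an open set `U` not containing `0`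
and satisfies `y'' = (6 x y^2 + 1 - 2 x^4 y') / x^5` on `U`, then `ȳ(t) := y(1/t)`
is twice differentiable on `V = {1/x : x ∈ U}` and satisfies the first Painlevé
equation `ȳ'' = 6 ȳ^2 + t` there. -/
theorem statement1 (U : Set ℝ) (hU : IsOpen U) (h0 : (0:ℝ) ∉ U) (y : ℝ → ℝ)
    (hy1 : ∀ x ∈ U, DifferentiableAt ℝ y x)
    (hy2 : ∀ x ∈ U, DifferentiableAt ℝ (deriv y) x)
    (hode : ∀ x ∈ U, deriv (deriv y) x =
      (6 * x * (y x)^2 + 1 - 2 * x^4 * deriv y x) / x^5) :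
    ∀ t ∈ (fun x : ℝ => 1 / x) '' U,
      DifferentiableAt ℝ (fun s => y (1 / s)) t ∧
      DifferentiableAt ℝ (deriv (fun s => y (1 / s))) t ∧
      deriv (deriv (fun s => y (1 / s))) t = 6 * (y (1 / t))^2 + t :=
  statement1_general U h0 y hy1 hy2 hode
end

section
/- Let C ∈ ℂ, let Ω ⊆ ℂ² be a nonempty connected open set on which y ≠ 0, and let η : Ω → ℂ be a holomorphic function with η(x,y) ≠ 0 and ∂η/∂y ≠ 0 on Ω. Suppose that for all (x,y) ∈ Ω and all p ∈ ℂ: η_xx + 2p·η_xy + p²·η_yy + ((6y⁴ + x - 2p²)/(2y))·η_y = (6·η(x,y)⁴ + (x+C) - 2·(η_x + p·η_y)²)/(2·η(x,y)). Then C = 0 and there exists λ ∈ ℂ with λ² = 1 such that η(x,y) = λ·y for all (x,y) ∈ Ω. -/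
/-! Put `w = η²`. The coefficients of `p²` and `p⁰` in the determining equation give
`y w_yy = w_y` and `2y w_xx + (6y⁴ + x) w_y = 2y (6w² + x + C)`. The first integrates on each
`y`-slice to `w = a(x) y² + b(x)`; substituted into the second it becomes a polynomial identity
in `y`, whose coefficients give `a² = a`, `a'' = 12ab` and `b'' + xa = 6b² + x + C`. As
`w_y = 2ηη_y ≠ 0`, `a = 1`, hence `b = 0` and `C = 0`. So `η² = y²`, and on the connected `Ω`
the sign in `η = ±y` is constant. -/

open Filter Set Topology

/-- Partial derivative in the first variable of a function `ℂ × ℂ → ℂ`. -/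
noncomputable def cpX (η : ℂ × ℂ → ℂ) (q : ℂ × ℂ) : ℂ :=
  deriv (fun t => η (t, q.2)) q.1

/-- Partial derivative in the second variable of a function `ℂ × ℂ → ℂ`. -/
noncomputable def cpY (η : ℂ × ℂ → ℂ) (q : ℂ × ℂ) : ℂ :=
  deriv (fun t => η (q.1, t)) q.2

theorem coeff_sq_and_coeff_zero_of_forall_eq {K : Type*} [Field K] [CharZero K]
    {y e s r u α β γ δ : K} (hy : y ≠ 0) (he : e ≠ 0)
    (h : ∀ p : K, α + 2 * p * β + p ^ 2 * γ + ((s - 2 * p ^ 2) / (2 * y)) * δ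
      = (r - 2 * (u + p * δ) ^ 2) / (2 * e)) :
    y * (e * γ + δ ^ 2) = e * δ ∧ y * (2 * (u ^ 2 + e * α)) + s * (e * δ) = y * r := by
  have h0 := h 0
  have h1 := h 1
  have hm := h (-1)
  field_simp at h0 h1 hm
  exact ⟨by linear_combination (h1 + hm - 2 * h0) / 4, by linear_combination h0⟩

section Deriv

variable {𝕜 : Type*} [NontriviallyNormedField 𝕜]

theorem AnalyticAt.deriv_deriv_sq [CompleteSpace 𝕜] {h : 𝕜 → 𝕜} {x : 𝕜}
    (hh : AnalyticAt 𝕜 h x) :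
    deriv (deriv fun t => h t ^ 2) x = 2 * (deriv h x ^ 2 + h x * deriv (deriv h) x) := by
  have hd : deriv (fun t => h t ^ 2) =ᶠ[𝓝 x] fun t => 2 * h t * deriv h t := by
    filter_upwards [hh.eventually_analyticAt] with t ht
    simp [deriv_fun_pow ht.differentiableAt]
  rw [hd.deriv_eq, ((hh.differentiableAt.hasDerivAt.const_mul 2).fun_mul
    hh.deriv.differentiableAt.hasDerivAt).deriv]
  ring

theorem AnalyticAt.deriv_deriv_mul_const_add [CompleteSpace 𝕜] {a b : 𝕜 → 𝕜} {x : 𝕜}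
    (ha : AnalyticAt 𝕜 a x) (hb : AnalyticAt 𝕜 b x) (c : 𝕜) :
    deriv (deriv fun t => a t * c + b t) x = deriv (deriv a) x * c + deriv (deriv b) x := by
  have hd : deriv (fun t => a t * c + b t) =ᶠ[𝓝 x] fun t => deriv a t * c + deriv b t := by
    filter_upwards [ha.eventually_analyticAt, hb.eventually_analyticAt] with t hat hbt
    exact ((hat.differentiableAt.hasDerivAt.mul_const c).add hbt.differentiableAt.hasDerivAt).deriv
  rw [hd.deriv_eq]
  exact ((ha.deriv.differentiableAt.hasDerivAt.mul_const c).add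
    hb.deriv.differentiableAt.hasDerivAt).deriv

theorem IsOpen.deriv_deriv_eq_zero_of_eqOn_const {F : Type*} [NormedAddCommGroup F]
    [NormedSpace 𝕜 F] {f : 𝕜 → F} {c : F} {U : Set 𝕜} {x : 𝕜}
    (hU : IsOpen U) (hf : EqOn f (fun _ => c) U) (hx : x ∈ U) : deriv (deriv f) x = 0 := by
  have hf' : f =ᶠ[𝓝 x] fun _ => c := eventually_of_mem (hU.mem_nhds hx) hf
  rw [hf'.deriv.deriv_eq]
  simp

end Deriv

theorem IsOpen.exists_eq_mul_sq_add_of_mul_deriv_deriv_eq_deriv {𝕜 : Type*} [RCLike 𝕜]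
    {g : 𝕜 → 𝕜} {V : Set 𝕜} (hV : IsOpen V) (hVc : IsPreconnected V)
    (hg : DifferentiableOn 𝕜 g V) (hg' : DifferentiableOn 𝕜 (deriv g) V)
    (hV0 : ∀ t ∈ V, t ≠ 0)
    (hode : ∀ t ∈ V, t * deriv (deriv g) t = deriv g t) :
    ∃ a b : 𝕜, ∀ t ∈ V, g t = a * t ^ 2 + b := by
  obtain ⟨c, hc⟩ := hV.exists_is_const_of_deriv_eq_zero hVc (f := fun t => deriv g t / t)
    (hg'.div differentiableOn_id hV0) fun t ht => by
      have hquot := (hg'.differentiableAt (hV.mem_nhds ht)).hasDerivAt.fun_div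
        (hasDerivAt_id' t) (hV0 t ht)
      rw [Pi.zero_apply, hquot.deriv, mul_comm, hode t ht, mul_one, sub_self, zero_div]
  obtain ⟨b, hb⟩ := hV.exists_is_const_of_deriv_eq_zero hVc (f := fun t => g t - c / 2 * t ^ 2)
    (hg.sub (by fun_prop)) fun t ht => by
      have hdiff := (hg.differentiableAt (hV.mem_nhds ht)).hasDerivAt.fun_sub
        ((hasDerivAt_pow 2 t).const_mul (c / 2))
      rw [Pi.zero_apply, hdiff.deriv, ← hc t ht]
      field_simp [hV0 t ht]
      ring
  exact ⟨c / 2, b, fun t ht => by linear_combination hb t ht⟩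

section Slices

variable {𝕜 E F G : Type*} [NontriviallyNormedField 𝕜] [NormedAddCommGroup E]
  [NormedSpace 𝕜 E] [NormedAddCommGroup F] [NormedSpace 𝕜 F] [NormedAddCommGroup G]
  [NormedSpace 𝕜 G]
  {f : E × F → G} {Ω : Set (E × F)}

theorem DifferentiableOn.slice_fst (hf : DifferentiableOn 𝕜 f Ω) (y : F) :
    DifferentiableOn 𝕜 (fun x => f (x, y)) {x | (x, y) ∈ Ω} :=
  hf.comp (by fun_prop) fun _ hx => hx

theorem DifferentiableOn.slice_snd (hf : DifferentiableOn 𝕜 f Ω) (x : E) :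
    DifferentiableOn 𝕜 (fun y => f (x, y)) {y | (x, y) ∈ Ω} :=
  hf.comp (by fun_prop) fun _ hy => hy

end Slices

theorem DifferentiableOn.analyticAt_slice_fst {F G : Type*} [NormedAddCommGroup F]
    [NormedSpace ℂ F] [NormedAddCommGroup G] [NormedSpace ℂ G] [CompleteSpace G]
    {f : ℂ × F → G} {Ω : Set (ℂ × F)} (hf : DifferentiableOn ℂ f Ω) (hΩ : IsOpen Ω)
    {q : ℂ × F} (hq : q ∈ Ω) : AnalyticAt ℂ (fun x => f (x, q.2)) q.1 :=
  (hf.slice_fst q.2).analyticAt ((hΩ.preimage (by fun_prop)).mem_nhds hq)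

theorem DifferentiableOn.analyticAt_slice_snd {E G : Type*} [NormedAddCommGroup E]
    [NormedSpace ℂ E] [NormedAddCommGroup G] [NormedSpace ℂ G] [CompleteSpace G]
    {f : E × ℂ → G} {Ω : Set (E × ℂ)} (hf : DifferentiableOn ℂ f Ω) (hΩ : IsOpen Ω)
    {q : E × ℂ} (hq : q ∈ Ω) : AnalyticAt ℂ (fun y => f (q.1, y)) q.2 :=
  (hf.slice_snd q.1).analyticAt ((hΩ.preimage (by fun_prop)).mem_nhds hq)

theorem exists_eq_mul_sq_add_of_slice_ode {w : ℂ × ℂ → ℂ} {U V : Set ℂ} (hV : IsOpen V)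
    (hVc : IsPreconnected V) (hV0 : ∀ y ∈ V, y ≠ 0)
    (hwx : ∀ y ∈ V, DifferentiableOn ℂ (fun x => w (x, y)) U)
    (hwy : ∀ x ∈ U, DifferentiableOn ℂ (fun y => w (x, y)) V)
    (hode : ∀ x ∈ U, ∀ y ∈ V, y * cpY (cpY w) (x, y) = cpY w (x, y)) :
    ∃ a b : ℂ → ℂ, DifferentiableOn ℂ a U ∧ DifferentiableOn ℂ b U ∧
      ∀ x ∈ U, ∀ y ∈ V, w (x, y) = a x * y ^ 2 + b x := by
  rcases V.eq_empty_or_nonempty with rfl | ⟨y₀, hy₀⟩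
  · exact ⟨0, 0, differentiableOn_const 0, differentiableOn_const 0, by simp⟩
  -- reading the coefficients off at two points with distinct squares makes them holomorphic in `x`
  obtain ⟨y₁, hy₁, hy₁₀⟩ :=
    ((infinite_of_mem_nhds y₀ (hV.mem_nhds hy₀)).sdiff (toFinite {y₀, -y₀})).nonempty
  have hsq : y₁ ^ 2 - y₀ ^ 2 ≠ 0 := by
    rw [sub_ne_zero, Ne, sq_eq_sq_iff_eq_or_eq_neg]
    simpa using hy₁₀
  set a : ℂ → ℂ := fun x => (w (x, y₁) - w (x, y₀)) / (y₁ ^ 2 - y₀ ^ 2)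
  have ha : DifferentiableOn ℂ a U := ((hwx y₁ hy₁).sub (hwx y₀ hy₀)).div_const _
  refine ⟨a, fun x => w (x, y₀) - a x * y₀ ^ 2, ha, (hwx y₀ hy₀).sub (ha.mul_const _),
    fun x hx => ?_⟩
  obtain ⟨α, β, hαβ⟩ := hV.exists_eq_mul_sq_add_of_mul_deriv_deriv_eq_deriv hVc (hwy x hx)
    ((hwy x hx).analyticOnNhd hV).deriv.differentiableOn hV0 fun y hy => hode x hx y hy
  intro y hy
  simp only [a, hαβ y hy, hαβ y₁ hy₁, hαβ y₀ hy₀]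
  field_simp
  ring

theorem even_quartic_coeffs_eq_zero {c₄ c₂ c₀ : ℂ} {V : Set ℂ} (hV : IsOpen V)
    (hne : V.Nonempty) (h : ∀ y ∈ V, c₄ * y ^ 4 + c₂ * y ^ 2 + c₀ = 0) :
    c₄ = 0 ∧ c₂ = 0 ∧ c₀ = 0 := by
  obtain ⟨z₀, hz₀⟩ := hne
  have hP : AnalyticOnNhd ℂ (fun y : ℂ => c₄ * y ^ 4 + c₂ * y ^ 2 + c₀) univ :=
    Complex.analyticOnNhd_univ_iff_differentiable.2 (by fun_prop)
  have hzero : ∀ y : ℂ, c₄ * y ^ 4 + c₂ * y ^ 2 + c₀ = 0 := fun y =>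
    hP.eqOn_zero_of_preconnected_of_eventuallyEq_zero isPreconnected_univ (mem_univ z₀)
      (eventually_of_mem (hV.mem_nhds hz₀) h) (mem_univ y)
  have e₀ := hzero 0
  have e₁ := hzero 1
  have e₂ := hzero 2
  exact ⟨by linear_combination (e₂ - 4 * e₁ + 3 * e₀) / 12,
    by linear_combination (-e₂ + 16 * e₁ - 15 * e₀) / 12, by linear_combination e₀⟩

theorem forall_eq_one_eq_zero_of_eq_mul_sq_add {C : ℂ} {w : ℂ × ℂ → ℂ} {a b : ℂ → ℂ}
    {U V : Set ℂ} (hU : IsOpen U) (hV : IsOpen V) (hVne : V.Nonempty) (hV0 : ∀ y ∈ V, y ≠ 0)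
    (ha : DifferentiableOn ℂ a U) (hb : DifferentiableOn ℂ b U)
    (hw : ∀ x ∈ U, ∀ y ∈ V, w (x, y) = a x * y ^ 2 + b x)
    (hwy : ∀ x ∈ U, ∀ y ∈ V, cpY w (x, y) ≠ 0)
    (heq : ∀ x ∈ U, ∀ y ∈ V, 2 * y * cpX (cpX w) (x, y) + (6 * y ^ 4 + x) * cpY w (x, y)
      = 2 * y * (6 * w (x, y) ^ 2 + x + C)) :
    ∀ x ∈ U, C = 0 ∧ a x = 1 ∧ b x = 0 := by
  have hwy_eq : ∀ x ∈ U, ∀ y ∈ V, cpY w (x, y) = 2 * a x * y := by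
    intro x hx y hy
    have hslice : (fun t => w (x, t)) =ᶠ[𝓝 y] fun t => a x * t ^ 2 + b x :=
      eventually_of_mem (hV.mem_nhds hy) (hw x hx)
    simp [cpY, hslice.deriv_eq]
    ring
  have hwxx : ∀ x ∈ U, ∀ y ∈ V,
      cpX (cpX w) (x, y) = deriv (deriv a) x * y ^ 2 + deriv (deriv b) x := by
    intro x hx y hy
    have hslice : (fun t => w (t, y)) =ᶠ[𝓝 x] fun t => a t * y ^ 2 + b t :=
      eventually_of_mem (hU.mem_nhds hx) fun t ht => hw t ht y hy
    exact hslice.deriv.deriv_eq.trans <| (ha.analyticAt (hU.mem_nhds hx)).deriv_deriv_mul_const_add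
      (hb.analyticAt (hU.mem_nhds hx)) _
  have hcoef : ∀ x ∈ U, a x ^ 2 = a x ∧ deriv (deriv a) x = 12 * a x * b x ∧
      deriv (deriv b) x + x * a x = 6 * b x ^ 2 + x + C := by
    intro x hx
    obtain ⟨h₄, h₂, h₀⟩ := even_quartic_coeffs_eq_zero (c₄ := 6 * (a x ^ 2 - a x))
      (c₂ := 12 * a x * b x - deriv (deriv a) x)
      (c₀ := 6 * b x ^ 2 + x + C - deriv (deriv b) x - x * a x) hV hVne fun y hy => by
        have h := heq x hx y hy
        rw [hwxx x hx y hy, hwy_eq x hx y hy, hw x hx y hy] at h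
        refine mul_left_cancel₀ (mul_ne_zero two_ne_zero (hV0 y hy)) ?_
        linear_combination -h
    exact ⟨by linear_combination h₄ / 6, by linear_combination -h₂,
      by linear_combination -h₀⟩
  have ha1 : ∀ x ∈ U, a x = 1 := by
    intro x hx
    obtain ⟨y, hy⟩ := hVne
    have hax : a x ≠ 0 := fun h => hwy x hx y hy (by rw [hwy_eq x hx y hy, h]; ring)
    exact mul_left_cancel₀ hax (by linear_combination (hcoef x hx).1)
  have hb0 : ∀ x ∈ U, b x = 0 := by
    intro x hx
    have h := (hcoef x hx).2.1
    rw [hU.deriv_deriv_eq_zero_of_eqOn_const ha1 hx, ha1 x hx] at h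
    linear_combination -h / 12
  intro x hx
  have h := (hcoef x hx).2.2
  rw [hU.deriv_deriv_eq_zero_of_eqOn_const hb0 hx, ha1 x hx, hb0 x hx] at h
  exact ⟨by linear_combination -h, ha1 x hx, hb0 x hx⟩

theorem forall_eq_sq_of_reduced_eqns {C : ℂ} {Ω : Set (ℂ × ℂ)} {w : ℂ × ℂ → ℂ}
    (hΩ : IsOpen Ω) (hy0 : ∀ q ∈ Ω, q.2 ≠ 0) (hw : DifferentiableOn ℂ w Ω)
    (hwy : ∀ q ∈ Ω, cpY w q ≠ 0)
    (hode : ∀ q ∈ Ω, q.2 * cpY (cpY w) q = cpY w q)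
    (heq : ∀ q ∈ Ω, 2 * q.2 * cpX (cpX w) q + (6 * q.2 ^ 4 + q.1) * cpY w q
      = 2 * q.2 * (6 * w q ^ 2 + q.1 + C)) :
    ∀ q ∈ Ω, C = 0 ∧ w q = q.2 ^ 2 := by
  rintro ⟨x₀, y₀⟩ hq₀
  obtain ⟨r, hr, hball⟩ := Metric.isOpen_iff.1 hΩ _ hq₀
  have hUV : ∀ x ∈ Metric.ball x₀ r, ∀ y ∈ Metric.ball y₀ r, (x, y) ∈ Ω :=
    fun x hx y hy => hball (by rw [← ball_prod_same]; exact ⟨hx, hy⟩)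
  have hx₀ := Metric.mem_ball_self (x := x₀) hr
  have hy₀ := Metric.mem_ball_self (x := y₀) hr
  obtain ⟨a, b, ha, hb, hab⟩ := exists_eq_mul_sq_add_of_slice_ode Metric.isOpen_ball
    (convex_ball _ _).isPreconnected (fun y hy => hy0 _ (hUV x₀ hx₀ y hy))
    (fun y hy => (hw.slice_fst y).mono fun x hx => hUV x hx y hy)
    (fun x hx => (hw.slice_snd x).mono fun y hy => hUV x hx y hy)
    fun x hx y hy => hode _ (hUV x hx y hy)
  obtain ⟨hC, ha1, hb0⟩ := forall_eq_one_eq_zero_of_eq_mul_sq_add Metric.isOpen_ball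
    Metric.isOpen_ball ⟨y₀, hy₀⟩ (fun y hy => hy0 _ (hUV x₀ hx₀ y hy)) ha hb hab
    (fun x hx y hy => hwy _ (hUV x hx y hy)) (fun x hx y hy => heq _ (hUV x hx y hy)) x₀ hx₀
  refine ⟨hC, ?_⟩
  simpa [ha1, hb0] using hab x₀ hx₀ y₀ hy₀

/-- The Φ₃-symmetry pseudo-group of `y'' = (6y⁴ + x - 2(y')²)/(2y)` is
`{(x,y) ↦ (x, λy) : λ² = 1}`: any symmetry `x̄ = x + C`, `ȳ = η(x,y)` has `C = 0` and
`η(x,y) = λ y` with `λ² = 1`. -/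
theorem statement6 (C : ℂ) (Ω : Set (ℂ × ℂ)) (hΩo : IsOpen Ω) (hΩc : IsConnected Ω)
    (hy0 : ∀ q ∈ Ω, q.2 ≠ 0)
    (η : ℂ × ℂ → ℂ) (hη : DifferentiableOn ℂ η Ω)
    (hη0 : ∀ q ∈ Ω, η q ≠ 0) (hηy : ∀ q ∈ Ω, cpY η q ≠ 0)
    (hpde : ∀ q ∈ Ω, ∀ p : ℂ,
      cpX (cpX η) q + 2 * p * cpX (cpY η) q + p^2 * cpY (cpY η) q
        + ((6 * q.2^4 + q.1 - 2 * p^2) / (2 * q.2)) * cpY η q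
      = (6 * (η q)^4 + (q.1 + C) - 2 * (cpX η q + p * cpY η q)^2) / (2 * η q)) :
    C = 0 ∧ ∃ l : ℂ, l^2 = 1 ∧ ∀ q ∈ Ω, η q = l * q.2 := by
  have hwy : ∀ q ∈ Ω, cpY (fun q => η q ^ 2) q = 2 * η q * cpY η q := fun q hq => by
    simp [cpY, deriv_fun_pow (hη.analyticAt_slice_snd hΩo hq).differentiableAt]
  have hwyy : ∀ q ∈ Ω,
      cpY (cpY fun q => η q ^ 2) q = 2 * (cpY η q ^ 2 + η q * cpY (cpY η) q) :=
    fun q hq => (hη.analyticAt_slice_snd hΩo hq).deriv_deriv_sq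
  have hwxx : ∀ q ∈ Ω,
      cpX (cpX fun q => η q ^ 2) q = 2 * (cpX η q ^ 2 + η q * cpX (cpX η) q) :=
    fun q hq => (hη.analyticAt_slice_fst hΩo hq).deriv_deriv_sq
  have hcoef := fun q hq =>
    coeff_sq_and_coeff_zero_of_forall_eq (hy0 q hq) (hη0 q hq) (hpde q hq)
  have hsq := forall_eq_sq_of_reduced_eqns (C := C) (w := fun q => η q ^ 2) hΩo hy0
    (hη.pow 2)
    (fun q hq => by
      rw [hwy q hq]; exact mul_ne_zero (mul_ne_zero two_ne_zero (hη0 q hq)) (hηy q hq))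
    (fun q hq => by rw [hwyy q hq, hwy q hq]; linear_combination 2 * (hcoef q hq).1)
    (fun q hq => by rw [hwxx q hq, hwy q hq]; linear_combination 2 * (hcoef q hq).2)
  obtain ⟨q₁, hq₁⟩ := hΩc.nonempty
  refine ⟨(hsq q₁ hq₁).1, ?_⟩
  rcases hΩc.isPreconnected.eq_or_eq_neg_of_sq_eq hη.continuousOn continuous_snd.continuousOn
    (fun q hq => (hsq q hq).2) (fun hq => hy0 _ hq) with h | h
  · exact ⟨1, one_pow 2, fun q hq => by simpa using h hq⟩
  · exact ⟨-1, by norm_num, fun q hq => by simpa using h hq⟩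
end

section
/- Let C ∈ ℂ, let Ω ⊆ ℂ² be a nonempty connected open set, and let η : Ω → ℂ be holomorphic with ∂η/∂y ≠ 0 on Ω. Suppose that for all (x,y) ∈ Ω and all p ∈ ℂ: η_xx + 2p·η_xy + p²·η_yy + (6y² + x)·η_y = 6·η(x,y)² + (x + C). Then C = 0 and η(x,y) = y for all (x,y) ∈ Ω. -/
/-!
Comparing coefficients of `p` gives `η_yy = η_xy = 0`, so near any point `(x₀, y₀)` of `Ω`,
`η(x, y) = a(x) + b (y - y₀)` with a constant `b ≠ 0`. The remaining equation
`a'' + (6y² + x) b = 6 (a + b (y - y₀))² + x + C` is a polynomial identity in `y`: its `y²`, `y`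
and constant coefficients force `b = 1`, `a ≡ y₀`, and then `C = a'' = 0`.
-/

open Metric Set Filter Topology

theorem quadratic_coeffs_eq_zero_of_forall_mem_ball {𝕜 : Type*} [NontriviallyNormedField 𝕜]
    [NeZero (2 : 𝕜)] {α β γ : 𝕜} {r : ℝ} (hr : 0 < r)
    (h : ∀ t ∈ ball (0 : 𝕜) r, α + β * t + γ * t ^ 2 = 0) : α = 0 ∧ β = 0 ∧ γ = 0 := by
  obtain ⟨d, hd_pos, hdr⟩ := NormedField.exists_norm_lt 𝕜 hr
  have hd : d ≠ 0 := norm_pos_iff.mp hd_pos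
  have h₀ := h 0 (mem_ball_self hr)
  have hpos := h d (by simpa using hdr)
  have hneg := h (-d) (by simpa using hdr)
  have hγ : γ = 0 := by
    have : 2 * d ^ 2 * γ = 0 := by linear_combination hpos + hneg - 2 * h₀
    simpa [hd, two_ne_zero] using this
  have hβ : β = 0 := by
    have : 2 * d * β = 0 := by linear_combination hpos - hneg
    simpa [hd, two_ne_zero] using this
  exact ⟨by simpa using h₀, hβ, hγ⟩

theorem IsOpen.eqOn_add_smul_deriv_of_deriv_deriv_eq_zero {E : Type*} [NormedAddCommGroup E]
    [NormedSpace ℂ E] [CompleteSpace E] {f : ℂ → E} {s : Set ℂ} {c : ℂ} (hs : IsOpen s)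
    (hs' : IsPreconnected s) (hf : DifferentiableOn ℂ f s) (hf'' : s.EqOn (deriv (deriv f)) 0)
    (hc : c ∈ s) : s.EqOn f fun z => f c + (z - c) • deriv f c := by
  have hf' : s.EqOn (deriv f) fun _ => deriv f c := fun z hz =>
    hs.is_const_of_deriv_eq_zero hs' (hf.deriv hs) hf'' hz hc
  refine hs.eqOn_of_deriv_eq hs' hf (by fun_prop) (fun z hz => ?_) hc (by simp)
  have hline : HasDerivAt (fun z => f c + (z - c) • deriv f c) (deriv f c) z := by
    simpa using (((hasDerivAt_id z).sub_const c).smul_const (deriv f c)).const_add (f c)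
  rw [hf' hz, hline.deriv]

section PartialDerivatives

variable {η η' : ℂ × ℂ → ℂ} {q : ℂ × ℂ}

theorem Filter.EventuallyEq.cpX_eq (h : η =ᶠ[𝓝 q] η') : cpX η q = cpX η' q :=
  (h.comp_tendsto ((continuous_id.prodMk continuous_const).tendsto' q.1 q rfl)).deriv_eq

theorem Filter.EventuallyEq.cpY_eq (h : η =ᶠ[𝓝 q] η') : cpY η q = cpY η' q :=
  (h.comp_tendsto ((continuous_const.prodMk continuous_id).tendsto' q.2 q rfl)).deriv_eq

theorem Filter.EventuallyEq.cpX (h : η =ᶠ[𝓝 q] η') : cpX η =ᶠ[𝓝 q] cpX η' :=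
  h.eventuallyEq_nhds.mono fun _ h => h.cpX_eq

theorem cpY_add_mul_sub (a : ℂ → ℂ) (b y₀ : ℂ) (q : ℂ × ℂ) :
    cpY (fun q => a q.1 + b * (q.2 - y₀)) q = b := by
  have hline : HasDerivAt (fun y => a q.1 + b * (y - y₀)) b q.2 := by
    simpa using (((hasDerivAt_id q.2).sub_const y₀).const_mul b).const_add (a q.1)
  exact hline.deriv

theorem cpX_cpX_add_mul_sub (a : ℂ → ℂ) (b y₀ : ℂ) (q : ℂ × ℂ) :
    cpX (cpX (fun q => a q.1 + b * (q.2 - y₀))) q = deriv (deriv a) q.1 := by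
  have hcpX : cpX (fun q => a q.1 + b * (q.2 - y₀)) = fun q => deriv a q.1 := by
    funext q
    exact deriv_add_const (b * (q.2 - y₀))
  rw [hcpX]
  rfl

end PartialDerivatives

section Polydisc

variable {η : ℂ × ℂ → ℂ} {x₀ y₀ : ℂ} {r : ℝ}

theorem eq_add_cpY_mul_sub_of_cpY_cpY_eq_zero
    (hη : DifferentiableOn ℂ η (ball x₀ r ×ˢ ball y₀ r))
    (hyy : ∀ q ∈ ball x₀ r ×ˢ ball y₀ r, cpY (cpY η) q = 0)
    {x y : ℂ} (hx : x ∈ ball x₀ r) (hy : y ∈ ball y₀ r) :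
    η (x, y) = η (x, y₀) + cpY η (x, y₀) * (y - y₀) := by
  have hslice : DifferentiableOn ℂ (fun t => η (x, t)) (ball y₀ r) :=
    hη.comp (differentiableOn_const x |>.prodMk differentiableOn_id) fun t ht => ⟨hx, ht⟩
  have h := isOpen_ball.eqOn_add_smul_deriv_of_deriv_deriv_eq_zero
    (convex_ball y₀ r).isPreconnected hslice (fun t ht => hyy (x, t) ⟨hx, ht⟩)
    (mem_ball_self (pos_of_mem_ball hy)) hy
  calc η (x, y) = η (x, y₀) + (y - y₀) * cpY η (x, y₀) := h
    _ = η (x, y₀) + cpY η (x, y₀) * (y - y₀) := by ring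

theorem cpY_eq_of_cpX_cpY_eq_zero
    (hη : DifferentiableOn ℂ η (ball x₀ r ×ˢ ball y₀ r))
    (hyy : ∀ q ∈ ball x₀ r ×ˢ ball y₀ r, cpY (cpY η) q = 0)
    (hxy : ∀ q ∈ ball x₀ r ×ˢ ball y₀ r, cpX (cpY η) q = 0)
    {x : ℂ} (hx : x ∈ ball x₀ r) :
    cpY η (x, y₀) = cpY η (x₀, y₀) := by
  have hr := pos_of_mem_ball hx
  obtain ⟨d, hd, hdr⟩ := NormedField.exists_norm_lt ℂ hr
  have hd₀ : d ≠ 0 := norm_pos_iff.mp hd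
  have hyd : y₀ + d ∈ ball y₀ r := by simpa [dist_eq_norm] using hdr
  -- `cpY η (·, y₀)` is a difference quotient of `η`, hence holomorphic in `x`.
  have hquot : EqOn (fun x => cpY η (x, y₀)) (fun x => (η (x, y₀ + d) - η (x, y₀)) / d)
      (ball x₀ r) := fun x hx => by
    rw [eq_div_iff hd₀, eq_add_cpY_mul_sub_of_cpY_cpY_eq_zero hη hyy hx hyd]
    ring
  have hslice : ∀ y ∈ ball y₀ r, DifferentiableOn ℂ (fun x => η (x, y)) (ball x₀ r) :=
    fun y hy => hη.comp (differentiableOn_id.prodMk (differentiableOn_const y))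
      fun t ht => ⟨ht, hy⟩
  have hdiff : DifferentiableOn ℂ (fun x => cpY η (x, y₀)) (ball x₀ r) :=
    (((hslice _ hyd).sub (hslice _ (mem_ball_self hr))).div_const d).congr hquot
  exact isOpen_ball.is_const_of_deriv_eq_zero (convex_ball x₀ r).isPreconnected hdiff
    (fun x hx => hxy (x, y₀) ⟨hx, mem_ball_self hr⟩) hx (mem_ball_self hr)

end Polydisc

theorem painleve_coeffs {A a b x y₀ C : ℂ} {r : ℝ} (hr : 0 < r) (hb : b ≠ 0)
    (h : ∀ y ∈ ball y₀ r, A + (6 * y ^ 2 + x) * b = 6 * (a + b * (y - y₀)) ^ 2 + (x + C)) :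
    b = 1 ∧ a = y₀ ∧ A = C := by
  obtain ⟨hα, hβ, hγ⟩ := quadratic_coeffs_eq_zero_of_forall_mem_ball
    (α := A + (6 * y₀ ^ 2 + x) * b - 6 * a ^ 2 - (x + C)) (β := 12 * b * (y₀ - a))
    (γ := 6 * b * (1 - b)) hr fun t ht => by
      have hy : y₀ + t ∈ ball y₀ r := by simpa [dist_eq_norm] using ht
      linear_combination h (y₀ + t) hy
  have hb₁ : b = 1 := (sub_eq_zero.mp ((mul_eq_zero.mp hγ).resolve_left (by simp [hb]))).symm
  have ha : a = y₀ := (sub_eq_zero.mp ((mul_eq_zero.mp hβ).resolve_left (by simp [hb]))).symm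
  subst hb₁ ha
  exact ⟨rfl, rfl, by linear_combination hα⟩

theorem painleve_symmetry_local {η : ℂ × ℂ → ℂ} {x₀ y₀ C : ℂ} {r : ℝ} (hr : 0 < r)
    (hη : DifferentiableOn ℂ η (ball x₀ r ×ˢ ball y₀ r))
    (hyy : ∀ q ∈ ball x₀ r ×ˢ ball y₀ r, cpY (cpY η) q = 0)
    (hxy : ∀ q ∈ ball x₀ r ×ˢ ball y₀ r, cpX (cpY η) q = 0)
    (hb : cpY η (x₀, y₀) ≠ 0)
    (hE : ∀ q ∈ ball x₀ r ×ˢ ball y₀ r,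
      cpX (cpX η) q + (6 * q.2 ^ 2 + q.1) * cpY η q = 6 * η q ^ 2 + (q.1 + C)) :
    C = 0 ∧ η (x₀, y₀) = y₀ := by
  set a := fun x => η (x, y₀)
  set b := cpY η (x₀, y₀)
  have hmodel : EqOn η (fun q => a q.1 + b * (q.2 - y₀)) (ball x₀ r ×ˢ ball y₀ r) := by
    rintro ⟨x, y⟩ ⟨hx, hy⟩
    rw [eq_add_cpY_mul_sub_of_cpY_cpY_eq_zero hη hyy hx hy,
      cpY_eq_of_cpX_cpY_eq_zero hη hyy hxy hx]
  have hE' : ∀ x ∈ ball x₀ r, ∀ y ∈ ball y₀ r,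
      deriv (deriv a) x + (6 * y ^ 2 + x) * b = 6 * (a x + b * (y - y₀)) ^ 2 + (x + C) := by
    intro x hx y hy
    have hq : (x, y) ∈ ball x₀ r ×ˢ ball y₀ r := ⟨hx, hy⟩
    have hloc := hmodel.eventuallyEq_of_mem ((isOpen_ball.prod isOpen_ball).mem_nhds hq)
    have h := hE _ hq
    rwa [hloc.cpX.cpX_eq, cpX_cpX_add_mul_sub, hloc.cpY_eq, cpY_add_mul_sub, hmodel hq] at h
  have hcoeffs := fun x hx => painleve_coeffs hr hb (hE' x hx)
  have ha : a =ᶠ[𝓝 x₀] fun _ => y₀ :=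
    eventually_of_mem (isOpen_ball.mem_nhds (mem_ball_self hr)) fun x hx => (hcoeffs x hx).2.1
  have hA : deriv (deriv a) x₀ = 0 := by simp [ha.deriv.deriv_eq]
  obtain ⟨-, ha₀, hC⟩ := hcoeffs x₀ (mem_ball_self hr)
  exact ⟨hC ▸ hA, ha₀⟩

/-- The Φ₃-symmetry pseudo-group of the first Painlevé equation
`y'' = 6y² + x` is trivial: any symmetry `x̄ = x + C`, `ȳ = η(x,y)` has `C = 0`
and `η(x,y) = y`. -/
theorem statement7 (C : ℂ) (Ω : Set (ℂ × ℂ)) (hΩo : IsOpen Ω) (hΩc : IsConnected Ω)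
    (η : ℂ × ℂ → ℂ) (hη : DifferentiableOn ℂ η Ω)
    (hηy : ∀ q ∈ Ω, cpY η q ≠ 0)
    (hpde : ∀ q ∈ Ω, ∀ p : ℂ,
      cpX (cpX η) q + 2 * p * cpX (cpY η) q + p^2 * cpY (cpY η) q
        + (6 * q.2^2 + q.1) * cpY η q
      = 6 * (η q)^2 + (q.1 + C)) :
    C = 0 ∧ ∀ q ∈ Ω, η q = q.2 := by
  have hcoeffs : ∀ q ∈ Ω,
      cpX (cpX η) q + (6 * q.2 ^ 2 + q.1) * cpY η q - (6 * η q ^ 2 + (q.1 + C)) = 0 ∧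
        2 * cpX (cpY η) q = 0 ∧ cpY (cpY η) q = 0 := fun q hq =>
    quadratic_coeffs_eq_zero_of_forall_mem_ball one_pos fun p _ => by
      linear_combination hpde q hq p
  have hlocal : ∀ q ∈ Ω, C = 0 ∧ η q = q.2 := by
    rintro ⟨x₀, y₀⟩ hq
    obtain ⟨r, hr, hball⟩ := isOpen_iff.mp hΩo _ hq
    rw [← ball_prod_same] at hball
    exact painleve_symmetry_local hr (hη.mono hball) (fun q hq' => (hcoeffs q (hball hq')).2.2)
      (fun q hq' => by simpa using (hcoeffs q (hball hq')).2.1) (hηy _ hq)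
      fun q hq' => sub_eq_zero.mp (hcoeffs q (hball hq')).1
  obtain ⟨q₀, hq₀⟩ := hΩc.nonempty
  exact ⟨(hlocal q₀ hq₀).1, fun q hq => (hlocal q hq).2⟩
end

section
/- Let C ∈ ℂ, let Ω ⊆ ℂ² be a nonempty connected open set on which x ≠ 0, x + C ≠ 0 and y ≠ 0, and let η : Ω → ℂ be holomorphic with η(x,y) ≠ 0 and ∂η/∂y ≠ 0 on Ω. Suppose that for all (x,y) ∈ Ω and all p ∈ ℂ: η_xx + 2p·η_xy + p²·η_yy + (1/(x·y²))·η_y = 1/((x+C)·η(x,y)²). Then C = 0 and there exists λ ∈ ℂ with λ³ = 1 such that η(x,y) = λ·y for all (x,y) ∈ Ω. -/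
/-!
Comparing coefficients of `p` in the defining equation gives `η_yy = 0`, `η_xy = 0` and
`η_xx + η_y / (x y²) = 1 / ((x + C) η²)`. The first two make `η = a(x) + b y` on every small
polydisc, with a constant `b ≠ 0`. Substituting into the third and clearing denominators gives a
polynomial identity in `y` whose coefficients force `a = 0`, `a'' = 0` and `(x + C) b³ = x` on a
disc, hence `b³ = 1` and `C = 0`. So `η / y` is locally constant, thus constant on the connected `Ω`.
-/

open Metric Set Filter Topology

lemma exists_ne_mem_ball (c : ℂ) {r : ℝ} (hr : 0 < r) : ∃ z ∈ ball c r, z ≠ c :=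
  (Eventually.and (mem_nhdsWithin_of_mem_nhds (ball_mem_nhds c hr))
    (self_mem_nhdsWithin : ∀ᶠ z in 𝓝[≠] c, z ≠ c)).exists

lemma quadratic_coeffs_eq_zero {K : Type*} [Field K] [CharZero K] {a b c : K}
    (h : ∀ p : K, a + b * p + c * p ^ 2 = 0) : a = 0 ∧ b = 0 ∧ c = 0 := by
  have h0 := h 0
  have h1 := h 1
  have h2 := h (-1)
  refine ⟨by linear_combination h0, by linear_combination (h1 - h2) / 2,
    by linear_combination (h1 + h2 - 2 * h0) / 2⟩

lemma eq_zero_and_mul_pow_three_eq_of_forall {K : Type*} [Field K] [CharZero K] {m b s α x : K}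
    (hb : b ≠ 0) (hs : s ≠ 0)
    (h : ∀ y : K, (m * y ^ 2 + b) * (s * (α + b * y) ^ 2) = x * y ^ 2) :
    α = 0 ∧ s * b ^ 3 = x := by
  have hα : α = 0 := by
    have h0 : b * s * α ^ 2 = 0 := by linear_combination h 0
    simpa [hb, hs] using h0
  subst hα
  have hm : m * s * b ^ 2 = 0 := by linear_combination (h 2 - 4 * h 1) / 12
  have hm : m = 0 := by simpa [hb, hs] using hm
  exact ⟨rfl, by linear_combination h 1 - hm * s * b ^ 2⟩

lemma mul_eq_of_add_one_div_mul_eq {K : Type*} [Field K] {k b x y s w : K} (hx : x ≠ 0)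
    (hy : y ≠ 0) (hs : s ≠ 0) (hw : w ≠ 0) (h : k + 1 / (x * y ^ 2) * b = 1 / (s * w ^ 2)) :
    (k * x * y ^ 2 + b) * (s * w ^ 2) = x * y ^ 2 := by
  field_simp at h
  linear_combination h

lemma Differentiable.eq_of_eventuallyEq {f g : ℂ → ℂ} (hf : Differentiable ℂ f)
    (hg : Differentiable ℂ g) {z₀ : ℂ} (hfg : f =ᶠ[𝓝 z₀] g) : f = g :=
  (hf.differentiableOn.analyticOnNhd isOpen_univ).eq_of_eventuallyEq
    (hg.differentiableOn.analyticOnNhd isOpen_univ) hfg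

lemma IsOpen.eq_add_mul_sub_of_deriv_deriv_eq_zero {g : ℂ → ℂ} {s : Set ℂ} (hs : IsOpen s)
    (hs' : IsPreconnected s) (hg : DifferentiableOn ℂ g s) (hg'' : EqOn (deriv (deriv g)) 0 s)
    {z₀ : ℂ} (hz₀ : z₀ ∈ s) : EqOn g (fun z => g z₀ + deriv g z₀ * (z - z₀)) s := by
  have hg' : DifferentiableOn ℂ (deriv g) s := ((hg.analyticOnNhd hs).deriv).differentiableOn
  have hconst : EqOn (deriv g) (fun _ => deriv g z₀) s :=
    fun z hz => hs.is_const_of_deriv_eq_zero hs' hg' hg'' hz hz₀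
  refine hs.eqOn_of_deriv_eq hs' hg (by fun_prop) (fun z hz => ?_) hz₀ (by simp)
  rw [hconst hz]
  simp [deriv_const_add']

lemma DifferentiableAt.comp_mk_left {η : ℂ × ℂ → ℂ} {x y : ℂ}
    (h : DifferentiableAt ℂ η (x, y)) : DifferentiableAt ℂ (fun s => η (s, y)) x :=
  h.comp x (differentiableAt_id.prodMk (differentiableAt_const y))

lemma DifferentiableAt.comp_mk_right {η : ℂ × ℂ → ℂ} {x y : ℂ}
    (h : DifferentiableAt ℂ η (x, y)) : DifferentiableAt ℂ (fun s => η (x, s)) y :=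
  h.comp y ((differentiableAt_const x).prodMk differentiableAt_id)

lemma cpX_eq_deriv_of_eq_add {η : ℂ × ℂ → ℂ} {a g : ℂ → ℂ} {U V : Set ℂ} (hU : IsOpen U)
    (h : ∀ x ∈ U, ∀ y ∈ V, η (x, y) = a x + g y) {x y : ℂ} (hx : x ∈ U) (hy : y ∈ V) :
    cpX η (x, y) = deriv a x := by
  have hloc : (fun t => η (t, y)) =ᶠ[𝓝 x] fun t => a t + g y :=
    eventually_of_mem (hU.mem_nhds hx) fun t ht => h t ht y hy
  simp only [cpX, hloc.deriv_eq, deriv_add_const]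

lemma cpY_eq_deriv_of_eq_add {η : ℂ × ℂ → ℂ} {a g : ℂ → ℂ} {U V : Set ℂ} (hV : IsOpen V)
    (h : ∀ x ∈ U, ∀ y ∈ V, η (x, y) = a x + g y) {x y : ℂ} (hx : x ∈ U) (hy : y ∈ V) :
    cpY η (x, y) = deriv g y := by
  have hloc : (fun t => η (x, t)) =ᶠ[𝓝 y] fun t => a x + g t :=
    eventually_of_mem (hV.mem_nhds hy) fun t ht => h x hx t ht
  simp only [cpY, hloc.deriv_eq, deriv_const_add']

lemma eq_add_mul_sub_on_polydisc {η : ℂ × ℂ → ℂ} {x₀ y₀ : ℂ} {r : ℝ} (hr : 0 < r)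
    (hη : ∀ x ∈ ball x₀ r, ∀ y ∈ ball y₀ r, DifferentiableAt ℂ η (x, y))
    (hyy : ∀ x ∈ ball x₀ r, ∀ y ∈ ball y₀ r, cpY (cpY η) (x, y) = 0)
    (hxy : ∀ x ∈ ball x₀ r, cpX (cpY η) (x, y₀) = 0) :
    ∀ x ∈ ball x₀ r, ∀ y ∈ ball y₀ r, η (x, y) = η (x, y₀) + cpY η (x₀, y₀) * (y - y₀) := by
  have hy₀ : y₀ ∈ ball y₀ r := mem_ball_self hr
  have haffine : ∀ x ∈ ball x₀ r, ∀ y ∈ ball y₀ r,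
      η (x, y) = η (x, y₀) + cpY η (x, y₀) * (y - y₀) := fun x hx =>
    isOpen_ball.eq_add_mul_sub_of_deriv_deriv_eq_zero (convex_ball y₀ r).isPreconnected
      (fun y hy => (hη x hx y hy).comp_mk_right.differentiableWithinAt)
      (fun y hy => hyy x hx y hy) hy₀
  -- the slope is a difference quotient, hence holomorphic in `x`
  obtain ⟨y₁, hy₁, hne⟩ := exists_ne_mem_ball y₀ hr
  have hslope : ∀ x ∈ ball x₀ r, cpY η (x, y₀) = (η (x, y₁) - η (x, y₀)) / (y₁ - y₀) := by
    intro x hx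
    rw [eq_div_iff (sub_ne_zero.2 hne), haffine x hx y₁ hy₁]
    ring
  have hslope_diff : DifferentiableOn ℂ (fun x => cpY η (x, y₀)) (ball x₀ r) :=
    DifferentiableOn.congr (fun x hx => (((hη x hx y₁ hy₁).comp_mk_left.sub
      (hη x hx y₀ hy₀).comp_mk_left).div_const _).differentiableWithinAt) hslope
  intro x hx y hy
  rw [haffine x hx y hy, isOpen_ball.is_const_of_deriv_eq_zero (convex_ball x₀ r).isPreconnected
    hslope_diff (fun x hx => hxy x hx) hx (mem_ball_self hr)]

theorem eventuallyEq_mul_snd_of_determining_eqns {C : ℂ} {Ω : Set (ℂ × ℂ)} (hΩo : IsOpen Ω)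
    (hx0 : ∀ q ∈ Ω, q.1 ≠ 0) (hxC : ∀ q ∈ Ω, q.1 + C ≠ 0) (hy0 : ∀ q ∈ Ω, q.2 ≠ 0)
    {η : ℂ × ℂ → ℂ} (hη : DifferentiableOn ℂ η Ω)
    (hη0 : ∀ q ∈ Ω, η q ≠ 0) (hηy : ∀ q ∈ Ω, cpY η q ≠ 0)
    (hyy : ∀ q ∈ Ω, cpY (cpY η) q = 0) (hxy : ∀ q ∈ Ω, cpX (cpY η) q = 0)
    (hrest : ∀ q ∈ Ω,
      cpX (cpX η) q + 1 / (q.1 * q.2 ^ 2) * cpY η q = 1 / ((q.1 + C) * η q ^ 2))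
    {q₀ : ℂ × ℂ} (hq₀ : q₀ ∈ Ω) :
    C = 0 ∧ ∃ b : ℂ, b ^ 3 = 1 ∧ η =ᶠ[𝓝 q₀] fun q => b * q.2 := by
  obtain ⟨x₀, y₀⟩ := q₀
  obtain ⟨r, hr, hball⟩ := Metric.isOpen_iff.1 hΩo _ hq₀
  have hmem : ∀ x ∈ ball x₀ r, ∀ y ∈ ball y₀ r, (x, y) ∈ Ω := fun x hx y hy =>
    hball (by rw [← ball_prod_same]; exact ⟨hx, hy⟩)
  have hx₀ : x₀ ∈ ball x₀ r := mem_ball_self hr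
  have hy₀ : y₀ ∈ ball y₀ r := mem_ball_self hr
  set b := cpY η (x₀, y₀)
  set a : ℂ → ℂ := fun x => η (x, y₀) - b * y₀
  have hsplit : ∀ x ∈ ball x₀ r, ∀ y ∈ ball y₀ r, η (x, y) = a x + b * y := by
    intro x hx y hy
    rw [eq_add_mul_sub_on_polydisc hr
      (fun x hx y hy => hη.differentiableAt (hΩo.mem_nhds (hmem x hx y hy)))
      (fun x hx y hy => hyy _ (hmem x hx y hy)) (fun x hx => hxy _ (hmem x hx y₀ hy₀)) x hx y hy]
    ring
  have hcpY : ∀ x ∈ ball x₀ r, ∀ y ∈ ball y₀ r, cpY η (x, y) = b := fun x hx y hy =>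
    (cpY_eq_deriv_of_eq_add isOpen_ball hsplit hx hy).trans (by simp)
  have hcpXX : ∀ x ∈ ball x₀ r, ∀ y ∈ ball y₀ r, cpX (cpX η) (x, y) = deriv (deriv a) x :=
    fun x hx y hy => cpX_eq_deriv_of_eq_add isOpen_ball (g := fun _ => 0)
      (fun x hx y hy => by rw [add_zero]; exact cpX_eq_deriv_of_eq_add isOpen_ball hsplit hx hy)
      hx hy
  have hcoeffs : ∀ x ∈ ball x₀ r, a x = 0 ∧ (x + C) * b ^ 3 = x := by
    intro x hx
    -- cleared of denominators, the remaining equation is a polynomial identity in `y` near `y₀`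
    have hpoly : (fun y => (deriv (deriv a) x * x * y ^ 2 + b) * ((x + C) * (a x + b * y) ^ 2))
        = fun y => x * y ^ 2 := by
      refine Differentiable.eq_of_eventuallyEq (by fun_prop) (by fun_prop) (z₀ := y₀) ?_
      filter_upwards [isOpen_ball.mem_nhds hy₀] with y hy
      have hq := hmem x hx y hy
      have h := hrest _ hq
      rw [hcpXX x hx y hy, hcpY x hx y hy] at h
      rw [← hsplit x hx y hy]
      exact mul_eq_of_add_one_div_mul_eq (hx0 _ hq) (hy0 _ hq) (hxC _ hq) (hη0 _ hq) h
    exact eq_zero_and_mul_pow_three_eq_of_forall (hηy _ hq₀) (hxC _ (hmem x hx y₀ hy₀)) (congrFun hpoly)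
  obtain ⟨x₁, hx₁, hne⟩ := exists_ne_mem_ball x₀ hr
  have hb : b ^ 3 = 1 := mul_left_cancel₀ (sub_ne_zero.2 hne)
    (by linear_combination (hcoeffs x₁ hx₁).2 - (hcoeffs x₀ hx₀).2)
  refine ⟨by linear_combination (hcoeffs x₀ hx₀).2 - (x₀ + C) * hb, b, hb, ?_⟩
  filter_upwards [ball_mem_nhds _ hr] with ⟨x, y⟩ hq
  rw [← ball_prod_same] at hq
  rw [hsplit x hq.1 y hq.2, (hcoeffs x hq.1).1, zero_add]

/-- The Φ₃-symmetry pseudo-group of the Emden–Fowler equation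
`y'' = 1/(x y²)` is `{(x,y) ↦ (x, λy) : λ³ = 1}`: any symmetry `x̄ = x + C`,
`ȳ = η(x,y)` has `C = 0` and `η(x,y) = λ y` with `λ³ = 1`. -/
theorem statement8 (C : ℂ) (Ω : Set (ℂ × ℂ)) (hΩo : IsOpen Ω) (hΩc : IsConnected Ω)
    (hx0 : ∀ q ∈ Ω, q.1 ≠ 0) (hxC : ∀ q ∈ Ω, q.1 + C ≠ 0) (hy0 : ∀ q ∈ Ω, q.2 ≠ 0)
    (η : ℂ × ℂ → ℂ) (hη : DifferentiableOn ℂ η Ω)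
    (hη0 : ∀ q ∈ Ω, η q ≠ 0) (hηy : ∀ q ∈ Ω, cpY η q ≠ 0)
    (hpde : ∀ q ∈ Ω, ∀ p : ℂ,
      cpX (cpX η) q + 2 * p * cpX (cpY η) q + p^2 * cpY (cpY η) q
        + (1 / (q.1 * q.2^2)) * cpY η q
      = 1 / ((q.1 + C) * (η q)^2)) :
    C = 0 ∧ ∃ l : ℂ, l^3 = 1 ∧ ∀ q ∈ Ω, η q = l * q.2 := by
  have hcoeffs : ∀ q ∈ Ω,
      cpX (cpX η) q + 1 / (q.1 * q.2 ^ 2) * cpY η q - 1 / ((q.1 + C) * η q ^ 2) = 0 ∧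
        2 * cpX (cpY η) q = 0 ∧ cpY (cpY η) q = 0 := fun q hq =>
    quadratic_coeffs_eq_zero fun p => by linear_combination hpde q hq p
  have hloc : ∀ q ∈ Ω, C = 0 ∧ ∃ b : ℂ, b ^ 3 = 1 ∧ η =ᶠ[𝓝 q] fun q' => b * q'.2 :=
    fun q hq => eventuallyEq_mul_snd_of_determining_eqns hΩo hx0 hxC hy0 hη hη0 hηy
      (fun q hq => (hcoeffs q hq).2.2) (fun q hq => by simpa using (hcoeffs q hq).2.1)
      (fun q hq => sub_eq_zero.1 (hcoeffs q hq).1) hq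
  obtain ⟨q₀, hq₀⟩ := hΩc.nonempty
  obtain ⟨hC, l, hl, hηl⟩ := hloc q₀ hq₀
  have hratio_const : ∀ q ∈ Ω, ((fun q => η q / q.2 : ℂ × ℂ → ℂ) : Germ (𝓝 q) ℂ).IsConstant := by
    intro q hq
    obtain ⟨-, b, -, hb⟩ := hloc q hq
    refine ⟨b, ?_⟩
    filter_upwards [hb, hΩo.mem_nhds hq] with q' hq' hΩq'
    rw [hq', mul_div_cancel_right₀ _ (hy0 q' hΩq')]
  refine ⟨hC, l, hl, fun q hq => ?_⟩
  calc η q = η q / q.2 * q.2 := (div_mul_cancel₀ _ (hy0 q hq)).symm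
    _ = η q₀ / q₀.2 * q.2 := by rw [eq_of_germ_isConstant_on hratio_const hΩc.isPreconnected hq hq₀]
    _ = l * q.2 := by rw [hηl.self_of_nhds, mul_div_cancel_right₀ _ (hy0 q₀ hq₀)]
end

section
/- Let C ∈ ℝ, let f and f̄ be smooth real-valued functions of three variables (x,y,p) on suitable open sets, and let η be a smooth function of (x,y) with ∂η/∂y ≠ 0. Suppose that for all (x,y,p): f̄(x+C, η(x,y), η_x + p·η_y) = η_xx + 2p·η_xy + p²·η_yy + f(x,y,p)·η_y. Define, for a function g of (x,y,p), the invariant I₁[g] := -(1/4)·(g_p)² - g_y + (1/2)·(g_{xp} + p·g_{yp} + g·g_{pp}). Then for all (x,y,p): I₁[f̄](x+C, η(x,y), η_x + p·η_y) = I₁[f](x,y,p). -/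
/-- Partial derivative in the first variable `x` of `g(x,y,p)`. -/
noncomputable def pX (g : ℝ → ℝ → ℝ → ℝ) (x y p : ℝ) : ℝ :=
  deriv (fun t => g t y p) x

/-- Partial derivative in the second variable `y` of `g(x,y,p)`. -/
noncomputable def pY (g : ℝ → ℝ → ℝ → ℝ) (x y p : ℝ) : ℝ :=
  deriv (fun t => g x t p) y

/-- Partial derivative in the third variable `p` of `g(x,y,p)`. -/
noncomputable def pP (g : ℝ → ℝ → ℝ → ℝ) (x y p : ℝ) : ℝ :=
  deriv (fun t => g x y t) p

/-- Partial derivative in the first variable `x` of `η(x,y)`. -/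
noncomputable def eX (η : ℝ → ℝ → ℝ) (x y : ℝ) : ℝ :=
  deriv (fun t => η t y) x

/-- Partial derivative in the second variable `y` of `η(x,y)`. -/
noncomputable def eY (η : ℝ → ℝ → ℝ) (x y : ℝ) : ℝ :=
  deriv (fun t => η x t) y


/-- The fundamental invariant `I₁[g] = -(1/4) g_p² - g_y + (1/2)(g_xp + p g_yp + g g_pp)`. -/
noncomputable def I1 (g : ℝ → ℝ → ℝ → ℝ) (x y p : ℝ) : ℝ :=
  -(1/4) * (pP g x y p)^2 - pY g x y p
    + (1/2) * (pX (pP g) x y p + p * pY (pP g) x y p + g x y p * pP (pP g) x y p)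

def U3 (g : ℝ → ℝ → ℝ → ℝ) : ℝ × ℝ × ℝ → ℝ := fun q => g q.1 q.2.1 q.2.2
def U2 (h : ℝ → ℝ → ℝ) : ℝ × ℝ → ℝ := fun q => h q.1 q.2

lemma hasDerivAt_comp3 {G : ℝ × ℝ × ℝ → ℝ} (hG : Differentiable ℝ G)
    {a b c : ℝ → ℝ} {a' b' c' t : ℝ}
    (ha : HasDerivAt a a' t) (hb : HasDerivAt b b' t) (hc : HasDerivAt c c' t) :
    HasDerivAt (fun s => G (a s, b s, c s))
      (a' * fderiv ℝ G (a t, b t, c t) (1, 0, 0)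
        + b' * fderiv ℝ G (a t, b t, c t) (0, 1, 0)
        + c' * fderiv ℝ G (a t, b t, c t) (0, 0, 1)) t := by
  have h := (hG (a t, b t, c t)).hasFDerivAt.comp_hasDerivAt t (ha.prodMk (hb.prodMk hc))
  refine h.congr_deriv ?_
  have hv : ((a', b', c') : ℝ × ℝ × ℝ)
      = a' • (1, 0, 0) + b' • (0, 1, 0) + c' • (0, 0, 1) := by
    simp [Prod.ext_iff]
  rw [hv, map_add, map_add, map_smul, map_smul, map_smul]
  simp [smul_eq_mul]

lemma hasDerivAt_comp2 {G : ℝ × ℝ → ℝ} (hG : Differentiable ℝ G)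
    {a b : ℝ → ℝ} {a' b' t : ℝ}
    (ha : HasDerivAt a a' t) (hb : HasDerivAt b b' t) :
    HasDerivAt (fun s => G (a s, b s))
      (a' * fderiv ℝ G (a t, b t) (1, 0) + b' * fderiv ℝ G (a t, b t) (0, 1)) t := by
  have h := (hG (a t, b t)).hasFDerivAt.comp_hasDerivAt t (ha.prodMk hb)
  refine h.congr_deriv ?_
  have hv : ((a', b') : ℝ × ℝ) = a' • (1, 0) + b' • (0, 1) := by
    simp [Prod.ext_iff]
  rw [hv, map_add, map_smul, map_smul]
  simp [smul_eq_mul]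

lemma hasDerivAt_pXc {g : ℝ → ℝ → ℝ → ℝ} (hg : Differentiable ℝ (U3 g)) (x y p : ℝ) :
    HasDerivAt (fun t => g t y p) (pX g x y p) x := by
  have hd : Differentiable ℝ (fun t : ℝ => U3 g (t, y, p)) :=
    hg.comp (differentiable_id.prodMk ((differentiable_const y).prodMk (differentiable_const p)))
  exact (hd x).hasDerivAt

lemma hasDerivAt_pYc {g : ℝ → ℝ → ℝ → ℝ} (hg : Differentiable ℝ (U3 g)) (x y p : ℝ) :
    HasDerivAt (fun t => g x t p) (pY g x y p) y := by
  have hd : Differentiable ℝ (fun t : ℝ => U3 g (x, t, p)) :=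
    hg.comp ((differentiable_const x).prodMk (differentiable_id.prodMk (differentiable_const p)))
  exact (hd y).hasDerivAt

lemma hasDerivAt_pPc {g : ℝ → ℝ → ℝ → ℝ} (hg : Differentiable ℝ (U3 g)) (x y p : ℝ) :
    HasDerivAt (fun t => g x y t) (pP g x y p) p := by
  have hd : Differentiable ℝ (fun t : ℝ => U3 g (x, y, t)) :=
    hg.comp ((differentiable_const x).prodMk ((differentiable_const y).prodMk differentiable_id))
  exact (hd p).hasDerivAt

lemma hasDerivAt_eXc {h : ℝ → ℝ → ℝ} (hh : Differentiable ℝ (U2 h)) (x y : ℝ) :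
    HasDerivAt (fun t => h t y) (eX h x y) x := by
  have hd : Differentiable ℝ (fun t : ℝ => U2 h (t, y)) :=
    hh.comp (differentiable_id.prodMk (differentiable_const y))
  exact (hd x).hasDerivAt

lemma hasDerivAt_eYc {h : ℝ → ℝ → ℝ} (hh : Differentiable ℝ (U2 h)) (x y : ℝ) :
    HasDerivAt (fun t => h x t) (eY h x y) y := by
  have hd : Differentiable ℝ (fun t : ℝ => U2 h (x, t)) :=
    hh.comp ((differentiable_const x).prodMk differentiable_id)
  exact (hd y).hasDerivAt

lemma pX_eq {g : ℝ → ℝ → ℝ → ℝ} (hg : Differentiable ℝ (U3 g)) (x y p : ℝ) :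
    pX g x y p = fderiv ℝ (U3 g) (x, y, p) (1, 0, 0) := by
  have h := hasDerivAt_comp3 hg (hasDerivAt_id x) (hasDerivAt_const x y) (hasDerivAt_const x p)
  have h2 := (hasDerivAt_pXc hg x y p).unique h
  simpa using h2

lemma pY_eq {g : ℝ → ℝ → ℝ → ℝ} (hg : Differentiable ℝ (U3 g)) (x y p : ℝ) :
    pY g x y p = fderiv ℝ (U3 g) (x, y, p) (0, 1, 0) := by
  have h := hasDerivAt_comp3 hg (hasDerivAt_const y x) (hasDerivAt_id y) (hasDerivAt_const y p)
  have h2 := (hasDerivAt_pYc hg x y p).unique h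
  simpa using h2

lemma pP_eq {g : ℝ → ℝ → ℝ → ℝ} (hg : Differentiable ℝ (U3 g)) (x y p : ℝ) :
    pP g x y p = fderiv ℝ (U3 g) (x, y, p) (0, 0, 1) := by
  have h := hasDerivAt_comp3 hg (hasDerivAt_const p x) (hasDerivAt_const p y) (hasDerivAt_id p)
  have h2 := (hasDerivAt_pPc hg x y p).unique h
  simpa using h2

lemma eX_eq {h : ℝ → ℝ → ℝ} (hh : Differentiable ℝ (U2 h)) (x y : ℝ) :
    eX h x y = fderiv ℝ (U2 h) (x, y) (1, 0) := by
  have h1 := hasDerivAt_comp2 hh (hasDerivAt_id x) (hasDerivAt_const x y)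
  have h2 := (hasDerivAt_eXc hh x y).unique h1
  simpa using h2

lemma eY_eq {h : ℝ → ℝ → ℝ} (hh : Differentiable ℝ (U2 h)) (x y : ℝ) :
    eY h x y = fderiv ℝ (U2 h) (x, y) (0, 1) := by
  have h1 := hasDerivAt_comp2 hh (hasDerivAt_const y x) (hasDerivAt_id y)
  have h2 := (hasDerivAt_eYc hh x y).unique h1
  simpa using h2

lemma contDiff_dfun3 {G : ℝ × ℝ × ℝ → ℝ} (hG : ContDiff ℝ (⊤ : ℕ∞) G) (v : ℝ × ℝ × ℝ) :
    ContDiff ℝ (⊤ : ℕ∞) (fun q => fderiv ℝ G q v) :=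
  (hG.fderiv_right (by simp)).clm_apply contDiff_const

lemma contDiff_dfun2 {G : ℝ × ℝ → ℝ} (hG : ContDiff ℝ (⊤ : ℕ∞) G) (v : ℝ × ℝ) :
    ContDiff ℝ (⊤ : ℕ∞) (fun q => fderiv ℝ G q v) :=
  (hG.fderiv_right (by simp)).clm_apply contDiff_const

lemma U3_pP_eq {g : ℝ → ℝ → ℝ → ℝ} (hg : ContDiff ℝ (⊤ : ℕ∞) (U3 g)) :
    U3 (pP g) = fun q => fderiv ℝ (U3 g) q (0, 0, 1) := by
  funext q
  have h := pP_eq (hg.differentiable (by simp)) q.1 q.2.1 q.2.2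
  simpa [U3] using h

lemma U2_eX_eq {h : ℝ → ℝ → ℝ} (hh : ContDiff ℝ (⊤ : ℕ∞) (U2 h)) :
    U2 (eX h) = fun q => fderiv ℝ (U2 h) q (1, 0) := by
  funext q
  have h1 := eX_eq (hh.differentiable (by simp)) q.1 q.2
  simpa [U2] using h1

lemma U2_eY_eq {h : ℝ → ℝ → ℝ} (hh : ContDiff ℝ (⊤ : ℕ∞) (U2 h)) :
    U2 (eY h) = fun q => fderiv ℝ (U2 h) q (0, 1) := by
  funext q
  have h1 := eY_eq (hh.differentiable (by simp)) q.1 q.2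
  simpa [U2] using h1

lemma contDiff_U3_pP {g : ℝ → ℝ → ℝ → ℝ} (hg : ContDiff ℝ (⊤ : ℕ∞) (U3 g)) :
    ContDiff ℝ (⊤ : ℕ∞) (U3 (pP g)) := by
  rw [U3_pP_eq hg]; exact contDiff_dfun3 hg _

lemma contDiff_U2_eX {h : ℝ → ℝ → ℝ} (hh : ContDiff ℝ (⊤ : ℕ∞) (U2 h)) :
    ContDiff ℝ (⊤ : ℕ∞) (U2 (eX h)) := by
  rw [U2_eX_eq hh]; exact contDiff_dfun2 hh _

lemma contDiff_U2_eY {h : ℝ → ℝ → ℝ} (hh : ContDiff ℝ (⊤ : ℕ∞) (U2 h)) :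
    ContDiff ℝ (⊤ : ℕ∞) (U2 (eY h)) := by
  rw [U2_eY_eq hh]; exact contDiff_dfun2 hh _

lemma sym2 {H : ℝ × ℝ → ℝ} (hH : ContDiff ℝ (⊤ : ℕ∞) H) (z v w : ℝ × ℝ) :
    fderiv ℝ (fun q => fderiv ℝ H q v) z w = fderiv ℝ (fun q => fderiv ℝ H q w) z v := by
  have hd : Differentiable ℝ (fderiv ℝ H) := (hH.fderiv_right (m := (⊤ : ℕ∞)) (by simp)).differentiable (by simp)
  have key : ∀ a b : ℝ × ℝ, (fderiv ℝ (fderiv ℝ H) z a) b = (fderiv ℝ (fderiv ℝ H) z b) a :=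
    second_derivative_symmetric (fun y => ((hH.differentiable (by simp)) y).hasFDerivAt)
      (hd z).hasFDerivAt
  have h1 : ∀ u : ℝ × ℝ, fderiv ℝ (fun q => fderiv ℝ H q u) z
      = (fderiv ℝ (fderiv ℝ H) z).flip u := by
    intro u
    rw [fderiv_clm_apply (hd z) (differentiableAt_const u)]
    simp
  rw [h1 v, h1 w]
  simpa [ContinuousLinearMap.flip_apply] using key w v

lemma eXY_symm {h : ℝ → ℝ → ℝ} (hh : ContDiff ℝ (⊤ : ℕ∞) (U2 h)) (x y : ℝ) :
    eX (eY h) x y = eY (eX h) x y := by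
  have hdY : Differentiable ℝ (U2 (eY h)) := (contDiff_U2_eY hh).differentiable (by simp)
  have hdX : Differentiable ℝ (U2 (eX h)) := (contDiff_U2_eX hh).differentiable (by simp)
  rw [eX_eq hdY x y, eY_eq hdX x y, U2_eY_eq hh, U2_eX_eq hh]
  exact sym2 hh (x, y) (1, 0) (0, 1) |>.symm


lemma algebra_key (u v A B K AY BY KY fp fy fpp fyp fxp fv g3 g33 g32 g31 g2 p : ℝ)
    (hu : u ≠ 0)
    (e1 : g3 * u = 2 * B + 2 * p * K + fp * u)
    (e2 : g33 * u * u = 2 * K + fpp * u)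
    (e3 : (u * g32 + (B + p * K) * g33) * u + g3 * K
        = 2 * BY + 2 * p * KY + fyp * u + fp * K)
    (e4 : (g31 + v * g32 + (A + p * B) * g33) * u + g3 * B
        = 2 * AY + 2 * p * BY + fxp * u + fp * B)
    (e5 : u * g2 + (B + p * K) * g3 = AY + 2 * p * BY + p ^ 2 * KY + fy * u + fv * K) :
    -(1/4) * g3 ^ 2 - g2 + (1/2) * (g31 + (v + p * u) * g32
        + (A + 2 * p * B + p ^ 2 * K + fv * u) * g33)
      = -(1/4) * fp ^ 2 - fy + (1/2) * (fxp + p * fyp + fv * fpp) := by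
  have g3sq : g3 ^ 2 * u ^ 2 = (2 * B + 2 * p * K + fp * u) ^ 2 := by
    linear_combination (g3 * u + (2 * B + 2 * p * K + fp * u)) * e1
  have key : u ^ 3 * (-(1/4) * g3 ^ 2 - g2 + (1/2) * (g31 + (v + p * u) * g32
        + (A + 2 * p * B + p ^ 2 * K + fv * u) * g33))
      = u ^ 3 * (-(1/4) * fp ^ 2 - fy + (1/2) * (fxp + p * fyp + fv * fpp)) := by
    linear_combination (-(1/4) * u) * g3sq + (-u) * (u * e5 - (B + p * K) * e1)
      + (1/2) * (u ^ 2 * e4 - B * u * e1 - v * (u * e3 - K * e1 - (B + p * K) * e2)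
          - (A + p * B) * u * e2)
      + ((1/2) * (v + p * u)) * (u * e3 - K * e1 - (B + p * K) * e2)
      + ((1/2) * (A + 2 * p * B + p ^ 2 * K + fv * u) * u) * e2
  exact mul_left_cancel₀ (pow_ne_zero 3 hu) key


/-- `I₁` is an invariant of Φ₃-equivalences: if `x̄ = x + C`,
`ȳ = η(x,y)` maps `y'' = f(x,y,y')` to `ȳ'' = f̄(x̄,ȳ,ȳ')`, then
`I₁[f̄]` at the transformed point equals `I₁[f]` at the source point. -/
theorem statement9 (C : ℝ) (f fbar : ℝ → ℝ → ℝ → ℝ) (η : ℝ → ℝ → ℝ)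
    (hf : ContDiff ℝ (⊤ : ℕ∞) (fun q : ℝ × ℝ × ℝ => f q.1 q.2.1 q.2.2))
    (hfbar : ContDiff ℝ (⊤ : ℕ∞) (fun q : ℝ × ℝ × ℝ => fbar q.1 q.2.1 q.2.2))
    (hη : ContDiff ℝ (⊤ : ℕ∞) (fun q : ℝ × ℝ => η q.1 q.2))
    (hηy : ∀ x y : ℝ, eY η x y ≠ 0)
    (hpde : ∀ x y p : ℝ,
      fbar (x + C) (η x y) (eX η x y + p * eY η x y) =
        eX (eX η) x y + 2 * p * eX (eY η) x y + p^2 * eY (eY η) x y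
          + f x y p * eY η x y) :
    ∀ x y p : ℝ,
      I1 fbar (x + C) (η x y) (eX η x y + p * eY η x y) = I1 f x y p := by
  have hf3 : ContDiff ℝ (⊤ : ℕ∞) (U3 f) := hf
  have hfb3 : ContDiff ℝ (⊤ : ℕ∞) (U3 fbar) := hfbar
  have hη2 : ContDiff ℝ (⊤ : ℕ∞) (U2 η) := hη
  have hFd : Differentiable ℝ (U3 fbar) := hfb3.differentiable (by simp)
  have hfd : Differentiable ℝ (U3 f) := hf3.differentiable (by simp)
  have hηd : Differentiable ℝ (U2 η) := hη2.differentiable (by simp)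
  have hUeX : ContDiff ℝ (⊤ : ℕ∞) (U2 (eX η)) := contDiff_U2_eX hη2
  have hUeY : ContDiff ℝ (⊤ : ℕ∞) (U2 (eY η)) := contDiff_U2_eY hη2
  have hUeXd : Differentiable ℝ (U2 (eX η)) := hUeX.differentiable (by simp)
  have hUeYd : Differentiable ℝ (U2 (eY η)) := hUeY.differentiable (by simp)
  have hUA : Differentiable ℝ (U2 (eX (eX η))) := (contDiff_U2_eX hUeX).differentiable (by simp)
  have hUB : Differentiable ℝ (U2 (eX (eY η))) := (contDiff_U2_eX hUeY).differentiable (by simp)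
  have hUK : Differentiable ℝ (U2 (eY (eY η))) := (contDiff_U2_eY hUeY).differentiable (by simp)
  have hUpPf : ContDiff ℝ (⊤ : ℕ∞) (U3 (pP f)) := contDiff_U3_pP hf3
  have hUpPfd : Differentiable ℝ (U3 (pP f)) := hUpPf.differentiable (by simp)
  have hF3d : Differentiable ℝ (fun q : ℝ × ℝ × ℝ => fderiv ℝ (U3 fbar) q (0, 0, 1)) :=
    (contDiff_dfun3 hfb3 _).differentiable (by simp)
  -- E1 : first p-derivative of the PDE
  have E1 : ∀ x y p : ℝ,
      fderiv ℝ (U3 fbar) (x + C, η x y, eX η x y + p * eY η x y) (0, 0, 1) * eY η x y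
        = 2 * eX (eY η) x y + 2 * p * eY (eY η) x y + pP f x y p * eY η x y := by
    intro x y p
    have hc : HasDerivAt (fun s : ℝ => eX η x y + s * eY η x y) (eY η x y) p := by
      simpa using ((hasDerivAt_id p).mul_const (eY η x y)).const_add (eX η x y)
    have hL := hasDerivAt_comp3 hFd (hasDerivAt_const p (x + C)) (hasDerivAt_const p (η x y)) hc
    have hpow : HasDerivAt (fun s : ℝ => s ^ 2) (2 * p) p := by
      simpa using hasDerivAt_pow 2 p
    have hR := ((((((hasDerivAt_id p).const_mul 2).mul_const (eX (eY η) x y)).const_add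
        (eX (eX η) x y)).add (hpow.mul_const (eY (eY η) x y))).add
        ((hasDerivAt_pPc hfd x y p).mul_const (eY η x y)))
    have hR' := hR.congr_of_eventuallyEq
      (f₁ := fun s : ℝ => U3 fbar (x + C, η x y, eX η x y + s * eY η x y))
      (Filter.Eventually.of_forall fun s => hpde x y s)
    have h := hL.unique hR'
    linear_combination h
  -- E5 : y-derivative of the PDE
  have E5 : ∀ x y p : ℝ,
      eY η x y * fderiv ℝ (U3 fbar) (x + C, η x y, eX η x y + p * eY η x y) (0, 1, 0)
        + (eY (eX η) x y + p * eY (eY η) x y)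
          * fderiv ℝ (U3 fbar) (x + C, η x y, eX η x y + p * eY η x y) (0, 0, 1)
        = eY (eX (eX η)) x y + 2 * p * eY (eX (eY η)) x y + p ^ 2 * eY (eY (eY η)) x y
          + pY f x y p * eY η x y + f x y p * eY (eY η) x y := by
    intro x y p
    have hc : HasDerivAt (fun t : ℝ => eX η x t + p * eY η x t)
        (eY (eX η) x y + p * eY (eY η) x y) y :=
      (hasDerivAt_eYc hUeXd x y).add ((hasDerivAt_eYc hUeYd x y).const_mul p)
    have hL := hasDerivAt_comp3 hFd (hasDerivAt_const y (x + C)) (hasDerivAt_eYc hηd x y) hc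
    have hR := ((((hasDerivAt_eYc hUA x y).add ((hasDerivAt_eYc hUB x y).const_mul (2 * p))).add
        ((hasDerivAt_eYc hUK x y).const_mul (p ^ 2))).add
        ((hasDerivAt_pYc hfd x y p).mul (hasDerivAt_eYc hUeYd x y)))
    have hR' := hR.congr_of_eventuallyEq
      (f₁ := fun t : ℝ => U3 fbar (x + C, η x t, eX η x t + p * eY η x t))
      (Filter.Eventually.of_forall fun t => hpde x t p)
    have h := hL.unique hR'
    linear_combination h
  -- E2 : p-derivative of E1
  have E2 : ∀ x y p : ℝ,
      fderiv ℝ (fun q : ℝ × ℝ × ℝ => fderiv ℝ (U3 fbar) q (0, 0, 1))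
          (x + C, η x y, eX η x y + p * eY η x y) (0, 0, 1) * eY η x y * eY η x y
        = 2 * eY (eY η) x y + pP (pP f) x y p * eY η x y := by
    intro x y p
    have hc : HasDerivAt (fun s : ℝ => eX η x y + s * eY η x y) (eY η x y) p := by
      simpa using ((hasDerivAt_id p).mul_const (eY η x y)).const_add (eX η x y)
    have hL := (hasDerivAt_comp3 hF3d (hasDerivAt_const p (x + C)) (hasDerivAt_const p (η x y))
      hc).mul_const (eY η x y)
    have hR := ((((hasDerivAt_id p).const_mul 2).mul_const (eY (eY η) x y)).const_add
        (2 * eX (eY η) x y)).add ((hasDerivAt_pPc hUpPfd x y p).mul_const (eY η x y))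
    have hR' := hR.congr_of_eventuallyEq
      (f₁ := fun s : ℝ =>
        fderiv ℝ (U3 fbar) (x + C, η x y, eX η x y + s * eY η x y) (0, 0, 1) * eY η x y)
      (Filter.Eventually.of_forall fun s => E1 x y s)
    have h := hL.unique hR'
    linear_combination h
  -- E3 : y-derivative of E1
  have E3 : ∀ x y p : ℝ,
      (eY η x y * fderiv ℝ (fun q : ℝ × ℝ × ℝ => fderiv ℝ (U3 fbar) q (0, 0, 1))
            (x + C, η x y, eX η x y + p * eY η x y) (0, 1, 0)
          + (eY (eX η) x y + p * eY (eY η) x y)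
            * fderiv ℝ (fun q : ℝ × ℝ × ℝ => fderiv ℝ (U3 fbar) q (0, 0, 1))
              (x + C, η x y, eX η x y + p * eY η x y) (0, 0, 1)) * eY η x y
        + fderiv ℝ (U3 fbar) (x + C, η x y, eX η x y + p * eY η x y) (0, 0, 1)
            * eY (eY η) x y
        = 2 * eY (eX (eY η)) x y + 2 * p * eY (eY (eY η)) x y
          + pY (pP f) x y p * eY η x y + pP f x y p * eY (eY η) x y := by
    intro x y p
    have hc : HasDerivAt (fun t : ℝ => eX η x t + p * eY η x t)
        (eY (eX η) x y + p * eY (eY η) x y) y :=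
      (hasDerivAt_eYc hUeXd x y).add ((hasDerivAt_eYc hUeYd x y).const_mul p)
    have hL := (hasDerivAt_comp3 hF3d (hasDerivAt_const y (x + C)) (hasDerivAt_eYc hηd x y)
      hc).mul (hasDerivAt_eYc hUeYd x y)
    have hR := ((((hasDerivAt_eYc hUB x y).const_mul 2).add
        ((hasDerivAt_eYc hUK x y).const_mul (2 * p))).add
        ((hasDerivAt_pYc hUpPfd x y p).mul (hasDerivAt_eYc hUeYd x y)))
    have hR' := hR.congr_of_eventuallyEq
      (f₁ := fun t : ℝ =>
        fderiv ℝ (U3 fbar) (x + C, η x t, eX η x t + p * eY η x t) (0, 0, 1) * eY η x t)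
      (Filter.Eventually.of_forall fun t => E1 x t p)
    have h := hL.unique hR'
    linear_combination h
  -- E4 : x-derivative of E1
  have E4 : ∀ x y p : ℝ,
      (fderiv ℝ (fun q : ℝ × ℝ × ℝ => fderiv ℝ (U3 fbar) q (0, 0, 1))
            (x + C, η x y, eX η x y + p * eY η x y) (1, 0, 0)
          + eX η x y * fderiv ℝ (fun q : ℝ × ℝ × ℝ => fderiv ℝ (U3 fbar) q (0, 0, 1))
            (x + C, η x y, eX η x y + p * eY η x y) (0, 1, 0)
          + (eX (eX η) x y + p * eX (eY η) x y)
            * fderiv ℝ (fun q : ℝ × ℝ × ℝ => fderiv ℝ (U3 fbar) q (0, 0, 1))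
              (x + C, η x y, eX η x y + p * eY η x y) (0, 0, 1)) * eY η x y
        + fderiv ℝ (U3 fbar) (x + C, η x y, eX η x y + p * eY η x y) (0, 0, 1)
            * eX (eY η) x y
        = 2 * eX (eX (eY η)) x y + 2 * p * eX (eY (eY η)) x y
          + pX (pP f) x y p * eY η x y + pP f x y p * eX (eY η) x y := by
    intro x y p
    have ha : HasDerivAt (fun t : ℝ => t + C) 1 x := (hasDerivAt_id x).add_const C
    have hc : HasDerivAt (fun t : ℝ => eX η t y + p * eY η t y)
        (eX (eX η) x y + p * eX (eY η) x y) x :=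
      (hasDerivAt_eXc hUeXd x y).add ((hasDerivAt_eXc hUeYd x y).const_mul p)
    have hL := (hasDerivAt_comp3 hF3d ha (hasDerivAt_eXc hηd x y) hc).mul
      (hasDerivAt_eXc hUeYd x y)
    have hR := ((((hasDerivAt_eXc hUB x y).const_mul 2).add
        ((hasDerivAt_eXc hUK x y).const_mul (2 * p))).add
        ((hasDerivAt_pXc hUpPfd x y p).mul (hasDerivAt_eXc hUeYd x y)))
    have hR' := hR.congr_of_eventuallyEq
      (f₁ := fun t : ℝ =>
        fderiv ℝ (U3 fbar) (t + C, η t y, eX η t y + p * eY η t y) (0, 0, 1) * eY η t y)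
      (Filter.Eventually.of_forall fun t => E1 t y p)
    have h := hL.unique hR'
    linear_combination h
  -- assembly
  intro x y p
  have h1 : eX (eY η) = eY (eX η) := funext₂ (eXY_symm hη2)
  have hBX : eX (eX (eY η)) x y = eY (eX (eX η)) x y := by
    rw [h1]; exact eXY_symm hUeX x y
  have hKX : eX (eY (eY η)) x y = eY (eX (eY η)) x y := eXY_symm hUeY x y
  have e1 := E1 x y p
  have e2 := E2 x y p
  have e3 := E3 x y p
  have e4 := E4 x y p
  have e5 := E5 x y p
  rw [← h1] at e3 e5
  rw [hBX, hKX] at e4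
  have c3 : pX (pP fbar) (x + C) (η x y) (eX η x y + p * eY η x y)
      = fderiv ℝ (fun q : ℝ × ℝ × ℝ => fderiv ℝ (U3 fbar) q (0, 0, 1))
          (x + C, η x y, eX η x y + p * eY η x y) (1, 0, 0) := by
    rw [pX_eq ((contDiff_U3_pP hfb3).differentiable (by simp)), U3_pP_eq hfb3]
  have c4 : pY (pP fbar) (x + C) (η x y) (eX η x y + p * eY η x y)
      = fderiv ℝ (fun q : ℝ × ℝ × ℝ => fderiv ℝ (U3 fbar) q (0, 0, 1))
          (x + C, η x y, eX η x y + p * eY η x y) (0, 1, 0) := by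
    rw [pY_eq ((contDiff_U3_pP hfb3).differentiable (by simp)), U3_pP_eq hfb3]
  have c5 : pP (pP fbar) (x + C) (η x y) (eX η x y + p * eY η x y)
      = fderiv ℝ (fun q : ℝ × ℝ × ℝ => fderiv ℝ (U3 fbar) q (0, 0, 1))
          (x + C, η x y, eX η x y + p * eY η x y) (0, 0, 1) := by
    rw [pP_eq ((contDiff_U3_pP hfb3).differentiable (by simp)), U3_pP_eq hfb3]
  simp only [I1]
  rw [hpde x y p, pP_eq hFd (x + C) (η x y) (eX η x y + p * eY η x y),
    pY_eq hFd (x + C) (η x y) (eX η x y + p * eY η x y), c3, c4, c5]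
  linear_combination algebra_key _ _ _ _ _ _ _ _ _ _ _ _ _ _ _ _ _ _ _ _
    (hηy x y) e1 e2 e3 e4 e5
end

section
/- Let C ∈ ℝ, let f and f̄ be smooth real-valued functions of three variables (x,y,p), and let η be a smooth function of (x,y) with ∂η/∂y ≠ 0. Suppose that for all (x,y,p): f̄(x+C, η(x,y), η_x + p·η_y) = η_xx + 2p·η_xy + p²·η_yy + f(x,y,p)·η_y. Then for all (x,y,p): (∂³f̄/∂p̄³)(x+C, η(x,y), η_x + p·η_y) = f_{ppp}(x,y,p) / (η_y(x,y))², where ∂/∂p̄ denotes the partial derivative of f̄ with respect to its third argument. -/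
open scoped ContDiff

lemma one_le_inf : (1 : WithTop ℕ∞) ≤ ∞ := by exact_mod_cast le_top

lemma chain_deriv (c e : ℝ) (u : ℝ → ℝ) (hu : ContDiff ℝ ∞ u) :
    deriv (fun s => u (c + s * e)) = fun s => deriv u (c + s * e) * e := by
  funext s
  have h1 : HasDerivAt (fun s : ℝ => c + s * e) e s := by
    simpa using ((hasDerivAt_id s).mul_const e).const_add c
  exact (((hu.differentiable (by simp)) (c + s * e)).hasDerivAt.comp s h1).deriv

lemma aux3 (h F : ℝ → ℝ) (hh : ContDiff ℝ ∞ h) (hF : ContDiff ℝ ∞ F)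
    (A B D c e : ℝ) (he : e ≠ 0)
    (hkey : ∀ s, h (c + s * e) = A + 2*s*B + s^2*D + F s * e) :
    ∀ p, deriv (deriv (deriv h)) (c + p * e) = deriv (deriv (deriv F)) p / e^2 := by
  intro p
  have hdh : ContDiff ℝ ∞ (deriv h) := (contDiff_infty_iff_deriv.mp hh).2
  have hddh : ContDiff ℝ ∞ (deriv (deriv h)) := (contDiff_infty_iff_deriv.mp hdh).2
  have hdF : ContDiff ℝ ∞ (deriv F) := (contDiff_infty_iff_deriv.mp hF).2
  have hddF : ContDiff ℝ ∞ (deriv (deriv F)) := (contDiff_infty_iff_deriv.mp hdF).2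
  -- LHS chain
  have d1 : deriv (fun s => h (c + s * e)) = fun s => deriv h (c + s * e) * e :=
    chain_deriv c e h hh
  have d2 : deriv (deriv (fun s => h (c + s * e))) =
      fun s => deriv (deriv h) (c + s * e) * e * e := by
    rw [d1]; funext s
    rw [deriv_mul_const, chain_deriv c e (deriv h) hdh]
    exact ((hdh.differentiable (by simp)).comp
      ((differentiable_id.mul_const e).const_add c)) s
  have d3 : deriv (deriv (deriv (fun s => h (c + s * e)))) =
      fun s => deriv (deriv (deriv h)) (c + s * e) * e * e * e := by
    rw [d2]; funext s
    have : (fun s => deriv (deriv h) (c + s * e) * e * e)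
        = fun s => deriv (deriv h) (c + s * e) * (e * e) := by
      funext t; ring
    rw [this, deriv_mul_const, chain_deriv c e (deriv (deriv h)) hddh]
    · ring
    exact ((hddh.differentiable (by simp)).comp
      ((differentiable_id.mul_const e).const_add c)) s
  -- RHS
  have hfun : (fun s => h (c + s * e)) = fun s => A + 2*s*B + s^2*D + F s * e :=
    funext hkey
  have r1 : deriv (fun s : ℝ => A + 2*s*B + s^2*D + F s * e) =
      fun s => 2*B + 2*s*D + deriv F s * e := by
    funext s
    have hA : HasDerivAt (fun _ : ℝ => A) 0 s := hasDerivAt_const s A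
    have hB : HasDerivAt (fun s : ℝ => 2*s*B) (2*B) s := by
      simpa using ((hasDerivAt_id s).const_mul 2).mul_const B
    have hD : HasDerivAt (fun s : ℝ => s^2*D) (2*s*D) s := by
      simpa using (hasDerivAt_pow 2 s).mul_const D
    have hFe : HasDerivAt (fun s => F s * e) (deriv F s * e) s :=
      ((hF.differentiable (by simp)) s).hasDerivAt.mul_const e
    have := (((hA.add hB).add hD).add hFe).deriv
    exact this.trans (by ring)
  have r2 : deriv (fun s : ℝ => 2*B + 2*s*D + deriv F s * e) =
      fun s => 2*D + deriv (deriv F) s * e := by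
    funext s
    have hB : HasDerivAt (fun _ : ℝ => 2*B) 0 s := hasDerivAt_const s _
    have hD : HasDerivAt (fun s : ℝ => 2*s*D) (2*D) s := by
      simpa using ((hasDerivAt_id s).const_mul 2).mul_const D
    have hFe : HasDerivAt (fun s => deriv F s * e) (deriv (deriv F) s * e) s :=
      ((hdF.differentiable (by simp)) s).hasDerivAt.mul_const e
    have := ((hB.add hD).add hFe).deriv
    exact this.trans (by ring)
  have r3 : deriv (fun s : ℝ => 2*D + deriv (deriv F) s * e) =
      fun s => deriv (deriv (deriv F)) s * e := by
    funext s
    have hD : HasDerivAt (fun _ : ℝ => 2*D) 0 s := hasDerivAt_const s _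
    have hFe : HasDerivAt (fun s => deriv (deriv F) s * e)
        (deriv (deriv (deriv F)) s * e) s :=
      ((hddF.differentiable (by simp)) s).hasDerivAt.mul_const e
    have := (hD.add hFe).deriv
    exact this.trans (by ring)
  have final : deriv (deriv (deriv (fun s => h (c + s * e)))) p
      = deriv (deriv (deriv F)) p * e := by
    rw [hfun, r1, r2, r3]
  rw [d3] at final
  have h1 : deriv (deriv (deriv h)) (c + p * e) * e * e = deriv (deriv (deriv F)) p :=
    mul_right_cancel₀ he final
  rw [← h1]
  field_simp

/-- `f_ppp` is a relative invariant of weight `(η_y)⁻²` under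
Φ₃-equivalences: if `x̄ = x + C`, `ȳ = η(x,y)` maps `y'' = f(x,y,y')` to
`ȳ'' = f̄(x̄,ȳ,ȳ')`, then `f̄_p̄p̄p̄` at the transformed point equals
`f_ppp / (η_y)²` at the source point. -/
theorem statement10 (C : ℝ) (f fbar : ℝ → ℝ → ℝ → ℝ) (η : ℝ → ℝ → ℝ)
    (hf : ContDiff ℝ (⊤ : ℕ∞) (fun q : ℝ × ℝ × ℝ => f q.1 q.2.1 q.2.2))
    (hfbar : ContDiff ℝ (⊤ : ℕ∞) (fun q : ℝ × ℝ × ℝ => fbar q.1 q.2.1 q.2.2))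
    (hη : ContDiff ℝ (⊤ : ℕ∞) (fun q : ℝ × ℝ => η q.1 q.2))
    (hηy : ∀ x y : ℝ, eY η x y ≠ 0)
    (hpde : ∀ x y p : ℝ,
      fbar (x + C) (η x y) (eX η x y + p * eY η x y) =
        eX (eX η) x y + 2 * p * eX (eY η) x y + p^2 * eY (eY η) x y
          + f x y p * eY η x y) :
    ∀ x y p : ℝ,
      pP (pP (pP fbar)) (x + C) (η x y) (eX η x y + p * eY η x y) =
        pP (pP (pP f)) x y p / (eY η x y)^2 := by
  intro x y p
  have hh : ContDiff ℝ ∞ (fun t => fbar (x + C) (η x y) t) :=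
    (hfbar.of_le (by simp)).comp (contDiff_const.prodMk (contDiff_const.prodMk contDiff_id))
  have hF : ContDiff ℝ ∞ (fun t => f x y t) :=
    (hf.of_le (by simp)).comp (contDiff_const.prodMk (contDiff_const.prodMk contDiff_id))
  simp only [pP]
  exact aux3 (fun t => fbar (x + C) (η x y) t) (fun t => f x y t) hh hF
    (eX (eX η) x y) (eX (eY η) x y) (eY (eY η) x y) (eX η x y) (eY η x y)
    (hηy x y) (fun s => hpde x y s) p
end

section
/- Let C ∈ ℝ, let f and f̄ be smooth real-valued functions of three variables (x,y,p), and let η be a smooth function of (x,y) with ∂η/∂y ≠ 0. Suppose that for all (x,y,p): f̄(x+C, η(x,y), η_x + p·η_y) = η_xx + 2p·η_xy + p²·η_yy + f(x,y,p)·η_y. Define for a function g of (x,y,p) the quantity N[g] := g_{yp} - (g_{xpp} + p·g_{ypp} + g·g_{ppp}). Then for all (x,y,p): N[f̄](x+C, η(x,y), η_x + p·η_y) = N[f](x,y,p) / η_y(x,y). -/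
/-- The relative invariant `N[g] = g_yp - (g_xpp + p g_ypp + g g_ppp)`,
i.e. `g_yp - D_x g_pp` where `D_x` is the Cartan field. -/
noncomputable def Ninv (g : ℝ → ℝ → ℝ → ℝ) (x y p : ℝ) : ℝ :=
  pY (pP g) x y p
    - (pX (pP (pP g)) x y p + p * pY (pP (pP g)) x y p + g x y p * pP (pP (pP g)) x y p)

noncomputable def Dv {E : Type*} [NormedAddCommGroup E] [NormedSpace ℝ E]
    (v : E) (G : E → ℝ) (q : E) : ℝ := fderiv ℝ G q v

theorem Dv_contDiff {E : Type*} [NormedAddCommGroup E] [NormedSpace ℝ E]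
    {G : E → ℝ} (hG : ContDiff ℝ (⊤ : ℕ∞) G) (v : E) : ContDiff ℝ (⊤ : ℕ∞) (Dv v G) := by
  exact (hG.fderiv_right (by simp)).clm_apply contDiff_const

theorem Dv_symm {E : Type*} [NormedAddCommGroup E] [NormedSpace ℝ E]
    {G : E → ℝ} (hG : ContDiff ℝ (⊤ : ℕ∞) G) (v w : E) (q : E) :
    Dv v (Dv w G) q = Dv w (Dv v G) q := by
  have hsym : IsSymmSndFDerivAt ℝ G q :=
    (hG.contDiffAt).isSymmSndFDerivAt (by rw [minSmoothness_of_isRCLikeNormedField]; exact (WithTop.coe_le_coe.mpr (le_top : (2 : ℕ∞) ≤ ⊤)))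
  have hd : DifferentiableAt ℝ (fderiv ℝ G) q :=
    ((hG.fderiv_right (m := (⊤ : ℕ∞)) (by simp)).differentiable (by simp)).differentiableAt
  have key : ∀ u z : E, Dv u (Dv z G) q = fderiv ℝ (fderiv ℝ G) q u z := by
    intro u z
    have : Dv z G = fun q' => (fderiv ℝ G q') z := rfl
    rw [Dv, this, fderiv_clm_apply hd (differentiableAt_const z)]
    simp
  rw [key, key]
  exact hsym v w

theorem hasDerivAt_comp3_s11 {G : ℝ × ℝ × ℝ → ℝ} (hG : ContDiff ℝ (⊤ : ℕ∞) G)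
    {c₁ c₂ c₃ : ℝ → ℝ} {d₁ d₂ d₃ t : ℝ}
    (h₁ : HasDerivAt c₁ d₁ t) (h₂ : HasDerivAt c₂ d₂ t) (h₃ : HasDerivAt c₃ d₃ t) :
    HasDerivAt (fun s => G (c₁ s, c₂ s, c₃ s))
      (d₁ * Dv (1,0,0) G (c₁ t, c₂ t, c₃ t) + d₂ * Dv (0,1,0) G (c₁ t, c₂ t, c₃ t)
        + d₃ * Dv (0,0,1) G (c₁ t, c₂ t, c₃ t)) t := by
  have hc : HasDerivAt (fun s => ((c₁ s, c₂ s, c₃ s) : ℝ × ℝ × ℝ)) (d₁, d₂, d₃) t :=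
    h₁.prodMk (h₂.prodMk h₃)
  have hGd : HasFDerivAt G (fderiv ℝ G (c₁ t, c₂ t, c₃ t)) (c₁ t, c₂ t, c₃ t) :=
    ((hG.differentiable (by simp)) _).hasFDerivAt
  have hcomp := hGd.comp_hasDerivAt t hc
  refine HasDerivAt.congr_deriv hcomp ?_
  have hv : ((d₁, d₂, d₃) : ℝ × ℝ × ℝ)
      = d₁ • ((1:ℝ),(0:ℝ),(0:ℝ)) + d₂ • ((0:ℝ),(1:ℝ),(0:ℝ)) + d₃ • ((0:ℝ),(0:ℝ),(1:ℝ)) := by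
    simp [Prod.ext_iff]
  rw [hv, map_add, map_add, map_smul, map_smul, map_smul]
  simp [Dv, smul_eq_mul]

theorem hasDerivAt_comp2_s11 {G : ℝ × ℝ → ℝ} (hG : ContDiff ℝ (⊤ : ℕ∞) G)
    {c₁ c₂ : ℝ → ℝ} {d₁ d₂ t : ℝ}
    (h₁ : HasDerivAt c₁ d₁ t) (h₂ : HasDerivAt c₂ d₂ t) :
    HasDerivAt (fun s => G (c₁ s, c₂ s))
      (d₁ * Dv (1,0) G (c₁ t, c₂ t) + d₂ * Dv (0,1) G (c₁ t, c₂ t)) t := by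
  have hc : HasDerivAt (fun s => ((c₁ s, c₂ s) : ℝ × ℝ)) (d₁, d₂) t := h₁.prodMk h₂
  have hGd : HasFDerivAt G (fderiv ℝ G (c₁ t, c₂ t)) (c₁ t, c₂ t) :=
    ((hG.differentiable (by simp)) _).hasFDerivAt
  have hcomp := hGd.comp_hasDerivAt t hc
  refine HasDerivAt.congr_deriv hcomp ?_
  have hv : ((d₁, d₂) : ℝ × ℝ) = d₁ • ((1:ℝ),(0:ℝ)) + d₂ • ((0:ℝ),(1:ℝ)) := by
    simp [Prod.ext_iff]
  rw [hv, map_add, map_smul, map_smul]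
  simp [Dv, smul_eq_mul]

theorem hasDerivAt3_2 {G : ℝ × ℝ × ℝ → ℝ} (hG : ContDiff ℝ (⊤ : ℕ∞) G) (x y p : ℝ) :
    HasDerivAt (fun t => G (x, t, p)) (Dv (0,1,0) G (x, y, p)) y := by
  simpa using hasDerivAt_comp3_s11 hG (hasDerivAt_const y x) (hasDerivAt_id y) (hasDerivAt_const y p)

theorem hasDerivAt3_3 {G : ℝ × ℝ × ℝ → ℝ} (hG : ContDiff ℝ (⊤ : ℕ∞) G) (x y p : ℝ) :
    HasDerivAt (fun t => G (x, y, t)) (Dv (0,0,1) G (x, y, p)) p := by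
  simpa using hasDerivAt_comp3_s11 hG (hasDerivAt_const p x) (hasDerivAt_const p y) (hasDerivAt_id p)

theorem hasDerivAt2_1 {G : ℝ × ℝ → ℝ} (hG : ContDiff ℝ (⊤ : ℕ∞) G) (x y : ℝ) :
    HasDerivAt (fun t => G (t, y)) (Dv (1,0) G (x, y)) x := by
  simpa using hasDerivAt_comp2_s11 hG (hasDerivAt_id x) (hasDerivAt_const x y)

theorem hasDerivAt2_2 {G : ℝ × ℝ → ℝ} (hG : ContDiff ℝ (⊤ : ℕ∞) G) (x y : ℝ) :
    HasDerivAt (fun t => G (x, t)) (Dv (0,1) G (x, y)) y := by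
  simpa using hasDerivAt_comp2_s11 hG (hasDerivAt_const y x) (hasDerivAt_id y)

theorem hasDerivAt3_1 {G : ℝ × ℝ × ℝ → ℝ} (hG : ContDiff ℝ (⊤ : ℕ∞) G) (x y p : ℝ) :
    HasDerivAt (fun t => G (t, y, p)) (Dv (1,0,0) G (x, y, p)) x := by
  simpa using hasDerivAt_comp3_s11 hG (hasDerivAt_id x) (hasDerivAt_const x y) (hasDerivAt_const x p)

theorem key (C : ℝ) (F Fb : ℝ × ℝ × ℝ → ℝ) (H : ℝ × ℝ → ℝ)
    (hF : ContDiff ℝ (⊤ : ℕ∞) F) (hFb : ContDiff ℝ (⊤ : ℕ∞) Fb) (hH : ContDiff ℝ (⊤ : ℕ∞) H)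
    (hB : ∀ x y : ℝ, Dv (0,1) H (x,y) ≠ 0)
    (hpde : ∀ x y p : ℝ,
      Fb (x + C, H (x,y), Dv (1,0) H (x,y) + p * Dv (0,1) H (x,y)) =
        Dv (1,0) (Dv (1,0) H) (x,y) + 2*p*Dv (1,0) (Dv (0,1) H) (x,y)
          + p^2 * Dv (0,1) (Dv (0,1) H) (x,y) + F (x,y,p) * Dv (0,1) H (x,y)) :
    ∀ x y p : ℝ,
      Dv (0,1,0) (Dv (0,0,1) Fb) (x + C, H (x,y), Dv (1,0) H (x,y) + p * Dv (0,1) H (x,y))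
        - (Dv (1,0,0) (Dv (0,0,1) (Dv (0,0,1) Fb)) (x + C, H (x,y), Dv (1,0) H (x,y) + p * Dv (0,1) H (x,y))
          + (Dv (1,0) H (x,y) + p * Dv (0,1) H (x,y))
              * Dv (0,1,0) (Dv (0,0,1) (Dv (0,0,1) Fb)) (x + C, H (x,y), Dv (1,0) H (x,y) + p * Dv (0,1) H (x,y))
          + Fb (x + C, H (x,y), Dv (1,0) H (x,y) + p * Dv (0,1) H (x,y))
              * Dv (0,0,1) (Dv (0,0,1) (Dv (0,0,1) Fb)) (x + C, H (x,y), Dv (1,0) H (x,y) + p * Dv (0,1) H (x,y)))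
      = (Dv (0,1,0) (Dv (0,0,1) F) (x,y,p)
          - (Dv (1,0,0) (Dv (0,0,1) (Dv (0,0,1) F)) (x,y,p)
            + p * Dv (0,1,0) (Dv (0,0,1) (Dv (0,0,1) F)) (x,y,p)
            + F (x,y,p) * Dv (0,0,1) (Dv (0,0,1) (Dv (0,0,1) F)) (x,y,p)))
        / Dv (0,1) H (x,y) := by
  have hFb3 : ContDiff ℝ (⊤ : ℕ∞) (Dv (0,0,1) Fb) := Dv_contDiff hFb _
  have hFb33 : ContDiff ℝ (⊤ : ℕ∞) (Dv (0,0,1) (Dv (0,0,1) Fb)) := Dv_contDiff hFb3 _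
  have hF3 : ContDiff ℝ (⊤ : ℕ∞) (Dv (0,0,1) F) := Dv_contDiff hF _
  have hF33 : ContDiff ℝ (⊤ : ℕ∞) (Dv (0,0,1) (Dv (0,0,1) F)) := Dv_contDiff hF3 _
  have hH1 : ContDiff ℝ (⊤ : ℕ∞) (Dv (1,0) H) := Dv_contDiff hH _
  have hH2 : ContDiff ℝ (⊤ : ℕ∞) (Dv (0,1) H) := Dv_contDiff hH _
  have hH12 : ContDiff ℝ (⊤ : ℕ∞) (Dv (1,0) (Dv (0,1) H)) := Dv_contDiff hH2 _
  have hH22 : ContDiff ℝ (⊤ : ℕ∞) (Dv (0,1) (Dv (0,1) H)) := Dv_contDiff hH2 _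
  -- Equation (1)
  have h1 : ∀ x y p : ℝ,
      Dv (0,1) H (x,y) * Dv (0,0,1) Fb (x + C, H (x,y), Dv (1,0) H (x,y) + p * Dv (0,1) H (x,y)) =
        2*Dv (1,0) (Dv (0,1) H) (x,y) + 2*p*Dv (0,1) (Dv (0,1) H) (x,y)
          + Dv (0,0,1) F (x,y,p) * Dv (0,1) H (x,y) := by
    intro x y p
    have hc3 : HasDerivAt (fun s : ℝ => Dv (1,0) H (x,y) + s * Dv (0,1) H (x,y))
        (Dv (0,1) H (x,y)) p := by
      simpa using ((hasDerivAt_id p).mul_const (Dv (0,1) H (x,y))).const_add (Dv (1,0) H (x,y))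
    have hLraw := hasDerivAt_comp3_s11 hFb (hasDerivAt_const p (x+C)) (hasDerivAt_const p (H (x,y))) hc3
    have hR : HasDerivAt (fun s : ℝ =>
        Dv (1,0) (Dv (1,0) H) (x,y) + 2*s*Dv (1,0) (Dv (0,1) H) (x,y)
          + s^2 * Dv (0,1) (Dv (0,1) H) (x,y) + F (x,y,s) * Dv (0,1) H (x,y))
        (2*Dv (1,0) (Dv (0,1) H) (x,y) + 2*p*Dv (0,1) (Dv (0,1) H) (x,y)
          + Dv (0,0,1) F (x,y,p) * Dv (0,1) H (x,y)) p := by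
      have t1 : HasDerivAt (fun s : ℝ => 2*s*Dv (1,0) (Dv (0,1) H) (x,y))
          (2*Dv (1,0) (Dv (0,1) H) (x,y)) p := by
        simpa [mul_assoc] using
          ((hasDerivAt_id p).const_mul (2:ℝ)).mul_const (Dv (1,0) (Dv (0,1) H) (x,y))
      have t2 : HasDerivAt (fun s : ℝ => s^2 * Dv (0,1) (Dv (0,1) H) (x,y))
          (2*p*Dv (0,1) (Dv (0,1) H) (x,y)) p := by
        simpa [mul_assoc] using (hasDerivAt_pow 2 p).mul_const (Dv (0,1) (Dv (0,1) H) (x,y))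
      have t3 := (hasDerivAt3_3 hF x y p).mul_const (Dv (0,1) H (x,y))
      simpa [Pi.add_def] using (((hasDerivAt_const p (Dv (1,0) (Dv (1,0) H) (x,y))).add t1).add t2).add t3
    have hfun : (fun s : ℝ => Fb (x + C, H (x,y), Dv (1,0) H (x,y) + s * Dv (0,1) H (x,y)))
        = (fun s : ℝ => Dv (1,0) (Dv (1,0) H) (x,y) + 2*s*Dv (1,0) (Dv (0,1) H) (x,y)
          + s^2 * Dv (0,1) (Dv (0,1) H) (x,y) + F (x,y,s) * Dv (0,1) H (x,y)) :=
      funext fun s => hpde x y s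
    have hL2 : HasDerivAt (fun s : ℝ => Dv (1,0) (Dv (1,0) H) (x,y) + 2*s*Dv (1,0) (Dv (0,1) H) (x,y)
          + s^2 * Dv (0,1) (Dv (0,1) H) (x,y) + F (x,y,s) * Dv (0,1) H (x,y))
        (0 * Dv (1,0,0) Fb (x + C, H (x,y), Dv (1,0) H (x,y) + p * Dv (0,1) H (x,y))
          + 0 * Dv (0,1,0) Fb (x + C, H (x,y), Dv (1,0) H (x,y) + p * Dv (0,1) H (x,y))
          + Dv (0,1) H (x,y) * Dv (0,0,1) Fb (x + C, H (x,y), Dv (1,0) H (x,y) + p * Dv (0,1) H (x,y))) p := by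
      rw [← hfun]; exact hLraw
    have hval := hL2.unique hR
    linear_combination hval
  -- Equation (2)
  have h2 : ∀ x y p : ℝ,
      Dv (0,1) H (x,y) * (Dv (0,1) H (x,y)
          * Dv (0,0,1) (Dv (0,0,1) Fb) (x + C, H (x,y), Dv (1,0) H (x,y) + p * Dv (0,1) H (x,y))) =
        2*Dv (0,1) (Dv (0,1) H) (x,y)
          + Dv (0,0,1) (Dv (0,0,1) F) (x,y,p) * Dv (0,1) H (x,y) := by
    intro x y p
    have hc3 : HasDerivAt (fun s : ℝ => Dv (1,0) H (x,y) + s * Dv (0,1) H (x,y))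
        (Dv (0,1) H (x,y)) p := by
      simpa using ((hasDerivAt_id p).mul_const (Dv (0,1) H (x,y))).const_add (Dv (1,0) H (x,y))
    have hLraw := (hasDerivAt_comp3_s11 hFb3 (hasDerivAt_const p (x+C))
      (hasDerivAt_const p (H (x,y))) hc3).const_mul (Dv (0,1) H (x,y))
    have hR : HasDerivAt (fun s : ℝ =>
        2*Dv (1,0) (Dv (0,1) H) (x,y) + 2*s*Dv (0,1) (Dv (0,1) H) (x,y)
          + Dv (0,0,1) F (x,y,s) * Dv (0,1) H (x,y))
        (2*Dv (0,1) (Dv (0,1) H) (x,y)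
          + Dv (0,0,1) (Dv (0,0,1) F) (x,y,p) * Dv (0,1) H (x,y)) p := by
      have t1 : HasDerivAt (fun s : ℝ => 2*s*Dv (0,1) (Dv (0,1) H) (x,y))
          (2*Dv (0,1) (Dv (0,1) H) (x,y)) p := by
        simpa [mul_assoc] using
          ((hasDerivAt_id p).const_mul (2:ℝ)).mul_const (Dv (0,1) (Dv (0,1) H) (x,y))
      have t3 := (hasDerivAt3_3 hF3 x y p).mul_const (Dv (0,1) H (x,y))
      simpa [Pi.add_def] using ((hasDerivAt_const p (2*Dv (1,0) (Dv (0,1) H) (x,y))).add t1).add t3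
    have hfun : (fun s : ℝ => Dv (0,1) H (x,y)
          * Dv (0,0,1) Fb (x + C, H (x,y), Dv (1,0) H (x,y) + s * Dv (0,1) H (x,y)))
        = (fun s : ℝ => 2*Dv (1,0) (Dv (0,1) H) (x,y) + 2*s*Dv (0,1) (Dv (0,1) H) (x,y)
          + Dv (0,0,1) F (x,y,s) * Dv (0,1) H (x,y)) := by
      funext s; linear_combination h1 x y s
    have hL2 : HasDerivAt (fun s : ℝ => 2*Dv (1,0) (Dv (0,1) H) (x,y) + 2*s*Dv (0,1) (Dv (0,1) H) (x,y)
          + Dv (0,0,1) F (x,y,s) * Dv (0,1) H (x,y))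
        (Dv (0,1) H (x,y) *
          (0 * Dv (1,0,0) (Dv (0,0,1) Fb) (x + C, H (x,y), Dv (1,0) H (x,y) + p * Dv (0,1) H (x,y))
          + 0 * Dv (0,1,0) (Dv (0,0,1) Fb) (x + C, H (x,y), Dv (1,0) H (x,y) + p * Dv (0,1) H (x,y))
          + Dv (0,1) H (x,y) * Dv (0,0,1) (Dv (0,0,1) Fb) (x + C, H (x,y), Dv (1,0) H (x,y) + p * Dv (0,1) H (x,y)))) p := by
      rw [← hfun]; exact hLraw
    have hval := hL2.unique hR
    linear_combination hval
  -- Equation (3)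
  have h3 : ∀ x y p : ℝ,
      Dv (0,1) H (x,y) * (Dv (0,1) H (x,y) * (Dv (0,1) H (x,y)
          * Dv (0,0,1) (Dv (0,0,1) (Dv (0,0,1) Fb)) (x + C, H (x,y), Dv (1,0) H (x,y) + p * Dv (0,1) H (x,y)))) =
        Dv (0,0,1) (Dv (0,0,1) (Dv (0,0,1) F)) (x,y,p) * Dv (0,1) H (x,y) := by
    intro x y p
    have hc3 : HasDerivAt (fun s : ℝ => Dv (1,0) H (x,y) + s * Dv (0,1) H (x,y))
        (Dv (0,1) H (x,y)) p := by
      simpa using ((hasDerivAt_id p).mul_const (Dv (0,1) H (x,y))).const_add (Dv (1,0) H (x,y))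
    have hLraw := ((hasDerivAt_comp3_s11 hFb33 (hasDerivAt_const p (x+C))
      (hasDerivAt_const p (H (x,y))) hc3).const_mul (Dv (0,1) H (x,y))).const_mul (Dv (0,1) H (x,y))
    have hR : HasDerivAt (fun s : ℝ =>
        2*Dv (0,1) (Dv (0,1) H) (x,y) + Dv (0,0,1) (Dv (0,0,1) F) (x,y,s) * Dv (0,1) H (x,y))
        (Dv (0,0,1) (Dv (0,0,1) (Dv (0,0,1) F)) (x,y,p) * Dv (0,1) H (x,y)) p := by
      have t3 := (hasDerivAt3_3 hF33 x y p).mul_const (Dv (0,1) H (x,y))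
      simpa [Pi.add_def] using (hasDerivAt_const p (2*Dv (0,1) (Dv (0,1) H) (x,y))).add t3
    have hfun : (fun s : ℝ => Dv (0,1) H (x,y) * (Dv (0,1) H (x,y)
          * Dv (0,0,1) (Dv (0,0,1) Fb) (x + C, H (x,y), Dv (1,0) H (x,y) + s * Dv (0,1) H (x,y))))
        = (fun s : ℝ => 2*Dv (0,1) (Dv (0,1) H) (x,y)
          + Dv (0,0,1) (Dv (0,0,1) F) (x,y,s) * Dv (0,1) H (x,y)) := by
      funext s; linear_combination h2 x y s
    have hL2 : HasDerivAt (fun s : ℝ => 2*Dv (0,1) (Dv (0,1) H) (x,y)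
          + Dv (0,0,1) (Dv (0,0,1) F) (x,y,s) * Dv (0,1) H (x,y))
        (Dv (0,1) H (x,y) * (Dv (0,1) H (x,y) *
          (0 * Dv (1,0,0) (Dv (0,0,1) (Dv (0,0,1) Fb)) (x + C, H (x,y), Dv (1,0) H (x,y) + p * Dv (0,1) H (x,y))
          + 0 * Dv (0,1,0) (Dv (0,0,1) (Dv (0,0,1) Fb)) (x + C, H (x,y), Dv (1,0) H (x,y) + p * Dv (0,1) H (x,y))
          + Dv (0,1) H (x,y) * Dv (0,0,1) (Dv (0,0,1) (Dv (0,0,1) Fb)) (x + C, H (x,y), Dv (1,0) H (x,y) + p * Dv (0,1) H (x,y))))) p := by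
      rw [← hfun]; exact hLraw
    have hval := hL2.unique hR
    linear_combination hval
  -- Equation (6) : y-derivative of (1)
  have h6 : ∀ x y p : ℝ,
      Dv (0,1) (Dv (0,1) H) (x,y)
          * Dv (0,0,1) Fb (x + C, H (x,y), Dv (1,0) H (x,y) + p * Dv (0,1) H (x,y))
        + Dv (0,1) H (x,y) *
          (0 * Dv (1,0,0) (Dv (0,0,1) Fb) (x + C, H (x,y), Dv (1,0) H (x,y) + p * Dv (0,1) H (x,y))
            + Dv (0,1) H (x,y) * Dv (0,1,0) (Dv (0,0,1) Fb) (x + C, H (x,y), Dv (1,0) H (x,y) + p * Dv (0,1) H (x,y))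
            + (Dv (0,1) (Dv (1,0) H) (x,y) + p * Dv (0,1) (Dv (0,1) H) (x,y))
              * Dv (0,0,1) (Dv (0,0,1) Fb) (x + C, H (x,y), Dv (1,0) H (x,y) + p * Dv (0,1) H (x,y))) =
        2 * Dv (0,1) (Dv (1,0) (Dv (0,1) H)) (x,y) + 2*p*Dv (0,1) (Dv (0,1) (Dv (0,1) H)) (x,y)
          + (Dv (0,1,0) (Dv (0,0,1) F) (x,y,p) * Dv (0,1) H (x,y)
            + Dv (0,0,1) F (x,y,p) * Dv (0,1) (Dv (0,1) H) (x,y)) := by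
    intro x y p
    have hB_t := hasDerivAt2_2 hH2 x y
    have hH_t := hasDerivAt2_2 hH x y
    have hA_t := hasDerivAt2_2 hH1 x y
    have hc3' : HasDerivAt (fun t : ℝ => Dv (1,0) H (x,t) + p * Dv (0,1) H (x,t))
        (Dv (0,1) (Dv (1,0) H) (x,y) + p * Dv (0,1) (Dv (0,1) H) (x,y)) y :=
      hA_t.add (hB_t.const_mul p)
    have hLraw := hB_t.mul (hasDerivAt_comp3_s11 hFb3 (hasDerivAt_const y (x+C)) hH_t hc3')
    have hR : HasDerivAt (fun t : ℝ =>
        2 * Dv (1,0) (Dv (0,1) H) (x,t) + 2*p*Dv (0,1) (Dv (0,1) H) (x,t)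
          + Dv (0,0,1) F (x,t,p) * Dv (0,1) H (x,t))
        (2 * Dv (0,1) (Dv (1,0) (Dv (0,1) H)) (x,y) + 2*p*Dv (0,1) (Dv (0,1) (Dv (0,1) H)) (x,y)
          + (Dv (0,1,0) (Dv (0,0,1) F) (x,y,p) * Dv (0,1) H (x,y)
            + Dv (0,0,1) F (x,y,p) * Dv (0,1) (Dv (0,1) H) (x,y))) y :=
      (((hasDerivAt2_2 hH12 x y).const_mul 2).add
        ((hasDerivAt2_2 hH22 x y).const_mul (2*p))).add
        ((hasDerivAt3_2 hF3 x y p).mul hB_t)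
    have hfun : (fun t : ℝ => Dv (0,1) H (x,t)
          * Dv (0,0,1) Fb (x + C, H (x,t), Dv (1,0) H (x,t) + p * Dv (0,1) H (x,t)))
        = (fun t : ℝ => 2 * Dv (1,0) (Dv (0,1) H) (x,t) + 2*p*Dv (0,1) (Dv (0,1) H) (x,t)
          + Dv (0,0,1) F (x,t,p) * Dv (0,1) H (x,t)) := by
      funext t; linear_combination h1 x t p
    have hL2 : HasDerivAt (fun t : ℝ =>
        2 * Dv (1,0) (Dv (0,1) H) (x,t) + 2*p*Dv (0,1) (Dv (0,1) H) (x,t)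
          + Dv (0,0,1) F (x,t,p) * Dv (0,1) H (x,t))
        (Dv (0,1) (Dv (0,1) H) (x,y)
            * Dv (0,0,1) Fb (x + C, H (x,y), Dv (1,0) H (x,y) + p * Dv (0,1) H (x,y))
          + Dv (0,1) H (x,y) *
            (0 * Dv (1,0,0) (Dv (0,0,1) Fb) (x + C, H (x,y), Dv (1,0) H (x,y) + p * Dv (0,1) H (x,y))
              + Dv (0,1) H (x,y) * Dv (0,1,0) (Dv (0,0,1) Fb) (x + C, H (x,y), Dv (1,0) H (x,y) + p * Dv (0,1) H (x,y))
              + (Dv (0,1) (Dv (1,0) H) (x,y) + p * Dv (0,1) (Dv (0,1) H) (x,y))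
                * Dv (0,0,1) (Dv (0,0,1) Fb) (x + C, H (x,y), Dv (1,0) H (x,y) + p * Dv (0,1) H (x,y)))) y := by
      rw [← hfun]; exact hLraw
    exact hL2.unique hR
  -- Equation (4) : y-derivative of (2)
  have h4 : ∀ x y p : ℝ,
      Dv (0,1) (Dv (0,1) H) (x,y) *
          (Dv (0,1) H (x,y) * Dv (0,0,1) (Dv (0,0,1) Fb) (x + C, H (x,y), Dv (1,0) H (x,y) + p * Dv (0,1) H (x,y)))
        + Dv (0,1) H (x,y) *
          (Dv (0,1) (Dv (0,1) H) (x,y) * Dv (0,0,1) (Dv (0,0,1) Fb) (x + C, H (x,y), Dv (1,0) H (x,y) + p * Dv (0,1) H (x,y))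
            + Dv (0,1) H (x,y) *
              (0 * Dv (1,0,0) (Dv (0,0,1) (Dv (0,0,1) Fb)) (x + C, H (x,y), Dv (1,0) H (x,y) + p * Dv (0,1) H (x,y))
                + Dv (0,1) H (x,y) * Dv (0,1,0) (Dv (0,0,1) (Dv (0,0,1) Fb)) (x + C, H (x,y), Dv (1,0) H (x,y) + p * Dv (0,1) H (x,y))
                + (Dv (0,1) (Dv (1,0) H) (x,y) + p * Dv (0,1) (Dv (0,1) H) (x,y))
                  * Dv (0,0,1) (Dv (0,0,1) (Dv (0,0,1) Fb)) (x + C, H (x,y), Dv (1,0) H (x,y) + p * Dv (0,1) H (x,y)))) =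
        2 * Dv (0,1) (Dv (0,1) (Dv (0,1) H)) (x,y)
          + (Dv (0,1,0) (Dv (0,0,1) (Dv (0,0,1) F)) (x,y,p) * Dv (0,1) H (x,y)
            + Dv (0,0,1) (Dv (0,0,1) F) (x,y,p) * Dv (0,1) (Dv (0,1) H) (x,y)) := by
    intro x y p
    have hB_t := hasDerivAt2_2 hH2 x y
    have hH_t := hasDerivAt2_2 hH x y
    have hA_t := hasDerivAt2_2 hH1 x y
    have hc3' : HasDerivAt (fun t : ℝ => Dv (1,0) H (x,t) + p * Dv (0,1) H (x,t))
        (Dv (0,1) (Dv (1,0) H) (x,y) + p * Dv (0,1) (Dv (0,1) H) (x,y)) y :=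
      hA_t.add (hB_t.const_mul p)
    have hLraw := hB_t.mul (hB_t.mul
      (hasDerivAt_comp3_s11 hFb33 (hasDerivAt_const y (x+C)) hH_t hc3'))
    have hR : HasDerivAt (fun t : ℝ =>
        2 * Dv (0,1) (Dv (0,1) H) (x,t)
          + Dv (0,0,1) (Dv (0,0,1) F) (x,t,p) * Dv (0,1) H (x,t))
        (2 * Dv (0,1) (Dv (0,1) (Dv (0,1) H)) (x,y)
          + (Dv (0,1,0) (Dv (0,0,1) (Dv (0,0,1) F)) (x,y,p) * Dv (0,1) H (x,y)
            + Dv (0,0,1) (Dv (0,0,1) F) (x,y,p) * Dv (0,1) (Dv (0,1) H) (x,y))) y :=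
      ((hasDerivAt2_2 hH22 x y).const_mul 2).add
        ((hasDerivAt3_2 hF33 x y p).mul hB_t)
    have hfun : (fun t : ℝ => Dv (0,1) H (x,t) * (Dv (0,1) H (x,t)
          * Dv (0,0,1) (Dv (0,0,1) Fb) (x + C, H (x,t), Dv (1,0) H (x,t) + p * Dv (0,1) H (x,t))))
        = (fun t : ℝ => 2 * Dv (0,1) (Dv (0,1) H) (x,t)
          + Dv (0,0,1) (Dv (0,0,1) F) (x,t,p) * Dv (0,1) H (x,t)) := by
      funext t; linear_combination h2 x t p
    have hL2 : HasDerivAt (fun t : ℝ =>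
        2 * Dv (0,1) (Dv (0,1) H) (x,t)
          + Dv (0,0,1) (Dv (0,0,1) F) (x,t,p) * Dv (0,1) H (x,t))
        (Dv (0,1) (Dv (0,1) H) (x,y) *
            (Dv (0,1) H (x,y) * Dv (0,0,1) (Dv (0,0,1) Fb) (x + C, H (x,y), Dv (1,0) H (x,y) + p * Dv (0,1) H (x,y)))
          + Dv (0,1) H (x,y) *
            (Dv (0,1) (Dv (0,1) H) (x,y) * Dv (0,0,1) (Dv (0,0,1) Fb) (x + C, H (x,y), Dv (1,0) H (x,y) + p * Dv (0,1) H (x,y))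
              + Dv (0,1) H (x,y) *
                (0 * Dv (1,0,0) (Dv (0,0,1) (Dv (0,0,1) Fb)) (x + C, H (x,y), Dv (1,0) H (x,y) + p * Dv (0,1) H (x,y))
                  + Dv (0,1) H (x,y) * Dv (0,1,0) (Dv (0,0,1) (Dv (0,0,1) Fb)) (x + C, H (x,y), Dv (1,0) H (x,y) + p * Dv (0,1) H (x,y))
                  + (Dv (0,1) (Dv (1,0) H) (x,y) + p * Dv (0,1) (Dv (0,1) H) (x,y))
                    * Dv (0,0,1) (Dv (0,0,1) (Dv (0,0,1) Fb)) (x + C, H (x,y), Dv (1,0) H (x,y) + p * Dv (0,1) H (x,y))))) y := by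
      rw [← hfun]; exact hLraw
    exact hL2.unique hR
  -- Equation (5) : x-derivative of (2)
  have h5 : ∀ x y p : ℝ,
      Dv (1,0) (Dv (0,1) H) (x,y) *
          (Dv (0,1) H (x,y) * Dv (0,0,1) (Dv (0,0,1) Fb) (x + C, H (x,y), Dv (1,0) H (x,y) + p * Dv (0,1) H (x,y)))
        + Dv (0,1) H (x,y) *
          (Dv (1,0) (Dv (0,1) H) (x,y) * Dv (0,0,1) (Dv (0,0,1) Fb) (x + C, H (x,y), Dv (1,0) H (x,y) + p * Dv (0,1) H (x,y))
            + Dv (0,1) H (x,y) *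
              (1 * Dv (1,0,0) (Dv (0,0,1) (Dv (0,0,1) Fb)) (x + C, H (x,y), Dv (1,0) H (x,y) + p * Dv (0,1) H (x,y))
                + Dv (1,0) H (x,y) * Dv (0,1,0) (Dv (0,0,1) (Dv (0,0,1) Fb)) (x + C, H (x,y), Dv (1,0) H (x,y) + p * Dv (0,1) H (x,y))
                + (Dv (1,0) (Dv (1,0) H) (x,y) + p * Dv (1,0) (Dv (0,1) H) (x,y))
                  * Dv (0,0,1) (Dv (0,0,1) (Dv (0,0,1) Fb)) (x + C, H (x,y), Dv (1,0) H (x,y) + p * Dv (0,1) H (x,y)))) =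
        2 * Dv (1,0) (Dv (0,1) (Dv (0,1) H)) (x,y)
          + (Dv (1,0,0) (Dv (0,0,1) (Dv (0,0,1) F)) (x,y,p) * Dv (0,1) H (x,y)
            + Dv (0,0,1) (Dv (0,0,1) F) (x,y,p) * Dv (1,0) (Dv (0,1) H) (x,y)) := by
    intro x y p
    have hB_x := hasDerivAt2_1 hH2 x y
    have hH_x := hasDerivAt2_1 hH x y
    have hA_x := hasDerivAt2_1 hH1 x y
    have hc1 : HasDerivAt (fun t : ℝ => t + C) 1 x := (hasDerivAt_id x).add_const C
    have hc3' : HasDerivAt (fun t : ℝ => Dv (1,0) H (t,y) + p * Dv (0,1) H (t,y))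
        (Dv (1,0) (Dv (1,0) H) (x,y) + p * Dv (1,0) (Dv (0,1) H) (x,y)) x :=
      hA_x.add (hB_x.const_mul p)
    have hLraw := hB_x.mul (hB_x.mul
      (hasDerivAt_comp3_s11 hFb33 hc1 hH_x hc3'))
    have hR : HasDerivAt (fun t : ℝ =>
        2 * Dv (0,1) (Dv (0,1) H) (t,y)
          + Dv (0,0,1) (Dv (0,0,1) F) (t,y,p) * Dv (0,1) H (t,y))
        (2 * Dv (1,0) (Dv (0,1) (Dv (0,1) H)) (x,y)
          + (Dv (1,0,0) (Dv (0,0,1) (Dv (0,0,1) F)) (x,y,p) * Dv (0,1) H (x,y)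
            + Dv (0,0,1) (Dv (0,0,1) F) (x,y,p) * Dv (1,0) (Dv (0,1) H) (x,y))) x :=
      ((hasDerivAt2_1 hH22 x y).const_mul 2).add
        ((hasDerivAt3_1 hF33 x y p).mul hB_x)
    have hfun : (fun t : ℝ => Dv (0,1) H (t,y) * (Dv (0,1) H (t,y)
          * Dv (0,0,1) (Dv (0,0,1) Fb) (t + C, H (t,y), Dv (1,0) H (t,y) + p * Dv (0,1) H (t,y))))
        = (fun t : ℝ => 2 * Dv (0,1) (Dv (0,1) H) (t,y)
          + Dv (0,0,1) (Dv (0,0,1) F) (t,y,p) * Dv (0,1) H (t,y)) := by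
      funext t; linear_combination h2 t y p
    have hL2 : HasDerivAt (fun t : ℝ =>
        2 * Dv (0,1) (Dv (0,1) H) (t,y)
          + Dv (0,0,1) (Dv (0,0,1) F) (t,y,p) * Dv (0,1) H (t,y))
        (Dv (1,0) (Dv (0,1) H) (x,y) *
            (Dv (0,1) H (x,y) * Dv (0,0,1) (Dv (0,0,1) Fb) (x + C, H (x,y), Dv (1,0) H (x,y) + p * Dv (0,1) H (x,y)))
          + Dv (0,1) H (x,y) *
            (Dv (1,0) (Dv (0,1) H) (x,y) * Dv (0,0,1) (Dv (0,0,1) Fb) (x + C, H (x,y), Dv (1,0) H (x,y) + p * Dv (0,1) H (x,y))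
              + Dv (0,1) H (x,y) *
                (1 * Dv (1,0,0) (Dv (0,0,1) (Dv (0,0,1) Fb)) (x + C, H (x,y), Dv (1,0) H (x,y) + p * Dv (0,1) H (x,y))
                  + Dv (1,0) H (x,y) * Dv (0,1,0) (Dv (0,0,1) (Dv (0,0,1) Fb)) (x + C, H (x,y), Dv (1,0) H (x,y) + p * Dv (0,1) H (x,y))
                  + (Dv (1,0) (Dv (1,0) H) (x,y) + p * Dv (1,0) (Dv (0,1) H) (x,y))
                    * Dv (0,0,1) (Dv (0,0,1) (Dv (0,0,1) Fb)) (x + C, H (x,y), Dv (1,0) H (x,y) + p * Dv (0,1) H (x,y))))) x := by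
      rw [← hfun]; exact hLraw
    exact hL2.unique hR
  -- Final algebra
  intro x y p
  have s1 : Dv (0,1) (Dv (1,0) H) (x,y) = Dv (1,0) (Dv (0,1) H) (x,y) :=
    Dv_symm hH (0,1) (1,0) (x,y)
  have s2 : Dv (0,1) (Dv (1,0) (Dv (0,1) H)) (x,y) = Dv (1,0) (Dv (0,1) (Dv (0,1) H)) (x,y) :=
    Dv_symm hH2 (0,1) (1,0) (x,y)
  have e1 := h1 x y p
  have e2 := h2 x y p
  have e3 := h3 x y p
  have e4 := h4 x y p
  have e5 := h5 x y p
  have e6 := h6 x y p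
  rw [s1] at e4 e6
  rw [s2] at e6
  rw [eq_div_iff (hB x y), hpde x y p]
  apply mul_left_cancel₀ (pow_ne_zero 2 (hB x y))
  linear_combination
    Dv (0,1) H (x,y) * e6 - Dv (0,1) H (x,y) * e5 - p * Dv (0,1) H (x,y) * e4
      - Dv (0,1) (Dv (0,1) H) (x,y) * e1
      + (Dv (1,0) (Dv (0,1) H) (x,y) + p * Dv (0,1) (Dv (0,1) H) (x,y)) * e2
      - F (x,y,p) * Dv (0,1) H (x,y) * e3
theorem pX_eq_s11 {G : ℝ × ℝ × ℝ → ℝ} (hG : ContDiff ℝ (⊤ : ℕ∞) G) (x y p : ℝ) :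
    pX (fun a b c => G (a, b, c)) x y p = Dv (1,0,0) G (x, y, p) :=
  (hasDerivAt3_1 hG x y p).deriv

theorem pY_eq_s11 {G : ℝ × ℝ × ℝ → ℝ} (hG : ContDiff ℝ (⊤ : ℕ∞) G) (x y p : ℝ) :
    pY (fun a b c => G (a, b, c)) x y p = Dv (0,1,0) G (x, y, p) :=
  (hasDerivAt3_2 hG x y p).deriv

theorem pP_eq_s11 {G : ℝ × ℝ × ℝ → ℝ} (hG : ContDiff ℝ (⊤ : ℕ∞) G) (x y p : ℝ) :
    pP (fun a b c => G (a, b, c)) x y p = Dv (0,0,1) G (x, y, p) :=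
  (hasDerivAt3_3 hG x y p).deriv

theorem eX_eq_s11 {G : ℝ × ℝ → ℝ} (hG : ContDiff ℝ (⊤ : ℕ∞) G) (x y : ℝ) :
    eX (fun a b => G (a, b)) x y = Dv (1,0) G (x, y) :=
  (hasDerivAt2_1 hG x y).deriv

theorem eY_eq_s11 {G : ℝ × ℝ → ℝ} (hG : ContDiff ℝ (⊤ : ℕ∞) G) (x y : ℝ) :
    eY (fun a b => G (a, b)) x y = Dv (0,1) G (x, y) :=
  (hasDerivAt2_2 hG x y).deriv

/-- `N[f] = f_yp - D_x f_pp` is a relative invariant of weight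
`(η_y)⁻¹` under Φ₃-equivalences. -/
theorem statement11 (C : ℝ) (f fbar : ℝ → ℝ → ℝ → ℝ) (η : ℝ → ℝ → ℝ)
    (hf : ContDiff ℝ (⊤ : ℕ∞) (fun q : ℝ × ℝ × ℝ => f q.1 q.2.1 q.2.2))
    (hfbar : ContDiff ℝ (⊤ : ℕ∞) (fun q : ℝ × ℝ × ℝ => fbar q.1 q.2.1 q.2.2))
    (hη : ContDiff ℝ (⊤ : ℕ∞) (fun q : ℝ × ℝ => η q.1 q.2))
    (hηy : ∀ x y : ℝ, eY η x y ≠ 0)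
    (hpde : ∀ x y p : ℝ,
      fbar (x + C) (η x y) (eX η x y + p * eY η x y) =
        eX (eX η) x y + 2 * p * eX (eY η) x y + p^2 * eY (eY η) x y
          + f x y p * eY η x y) :
    ∀ x y p : ℝ,
      Ninv fbar (x + C) (η x y) (eX η x y + p * eY η x y) =
        Ninv f x y p / eY η x y := by
  have hFb3 : ContDiff ℝ (⊤ : ℕ∞) (Dv (0,0,1) (fun q : ℝ × ℝ × ℝ => fbar q.1 q.2.1 q.2.2)) :=
    Dv_contDiff hfbar _
  have hFb33 : ContDiff ℝ (⊤ : ℕ∞) (Dv (0,0,1) (Dv (0,0,1) (fun q : ℝ × ℝ × ℝ => fbar q.1 q.2.1 q.2.2))) :=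
    Dv_contDiff hFb3 _
  have hF3 : ContDiff ℝ (⊤ : ℕ∞) (Dv (0,0,1) (fun q : ℝ × ℝ × ℝ => f q.1 q.2.1 q.2.2)) :=
    Dv_contDiff hf _
  have hF33 : ContDiff ℝ (⊤ : ℕ∞) (Dv (0,0,1) (Dv (0,0,1) (fun q : ℝ × ℝ × ℝ => f q.1 q.2.1 q.2.2))) :=
    Dv_contDiff hF3 _
  have hH1 : ContDiff ℝ (⊤ : ℕ∞) (Dv (1,0) (fun q : ℝ × ℝ => η q.1 q.2)) := Dv_contDiff hη _
  have hH2 : ContDiff ℝ (⊤ : ℕ∞) (Dv (0,1) (fun q : ℝ × ℝ => η q.1 q.2)) := Dv_contDiff hη _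
  -- conversion of partial derivatives to `Dv` form
  have c1 : pP fbar = fun a b c => Dv (0,0,1) (fun q : ℝ × ℝ × ℝ => fbar q.1 q.2.1 q.2.2) (a,b,c) :=
    funext fun a => funext fun b => funext fun c => pP_eq_s11 hfbar a b c
  have c2 : pP (fun a b c => Dv (0,0,1) (fun q : ℝ × ℝ × ℝ => fbar q.1 q.2.1 q.2.2) (a,b,c))
      = fun a b c => Dv (0,0,1) (Dv (0,0,1) (fun q : ℝ × ℝ × ℝ => fbar q.1 q.2.1 q.2.2)) (a,b,c) :=
    funext fun a => funext fun b => funext fun c => pP_eq_s11 hFb3 a b c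
  have c3 : pP (fun a b c => Dv (0,0,1) (Dv (0,0,1) (fun q : ℝ × ℝ × ℝ => fbar q.1 q.2.1 q.2.2)) (a,b,c))
      = fun a b c => Dv (0,0,1) (Dv (0,0,1) (Dv (0,0,1) (fun q : ℝ × ℝ × ℝ => fbar q.1 q.2.1 q.2.2))) (a,b,c) :=
    funext fun a => funext fun b => funext fun c => pP_eq_s11 hFb33 a b c
  have d1 : pP f = fun a b c => Dv (0,0,1) (fun q : ℝ × ℝ × ℝ => f q.1 q.2.1 q.2.2) (a,b,c) :=
    funext fun a => funext fun b => funext fun c => pP_eq_s11 hf a b c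
  have d2 : pP (fun a b c => Dv (0,0,1) (fun q : ℝ × ℝ × ℝ => f q.1 q.2.1 q.2.2) (a,b,c))
      = fun a b c => Dv (0,0,1) (Dv (0,0,1) (fun q : ℝ × ℝ × ℝ => f q.1 q.2.1 q.2.2)) (a,b,c) :=
    funext fun a => funext fun b => funext fun c => pP_eq_s11 hF3 a b c
  have d3 : pP (fun a b c => Dv (0,0,1) (Dv (0,0,1) (fun q : ℝ × ℝ × ℝ => f q.1 q.2.1 q.2.2)) (a,b,c))
      = fun a b c => Dv (0,0,1) (Dv (0,0,1) (Dv (0,0,1) (fun q : ℝ × ℝ × ℝ => f q.1 q.2.1 q.2.2))) (a,b,c) :=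
    funext fun a => funext fun b => funext fun c => pP_eq_s11 hF33 a b c
  have he1 : eX η = fun a b => Dv (1,0) (fun q : ℝ × ℝ => η q.1 q.2) (a,b) :=
    funext fun a => funext fun b => eX_eq_s11 hη a b
  have he2 : eY η = fun a b => Dv (0,1) (fun q : ℝ × ℝ => η q.1 q.2) (a,b) :=
    funext fun a => funext fun b => eY_eq_s11 hη a b
  -- hypothesis conversions
  have hB' : ∀ x y : ℝ, Dv (0,1) (fun q : ℝ × ℝ => η q.1 q.2) (x,y) ≠ 0 := by
    intro x y
    have heq : eY η x y = Dv (0,1) (fun q : ℝ × ℝ => η q.1 q.2) (x,y) := eY_eq_s11 hη x y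
    exact heq ▸ hηy x y
  have hpde' : ∀ x y p : ℝ,
      (fun q : ℝ × ℝ × ℝ => fbar q.1 q.2.1 q.2.2)
          (x + C, (fun q : ℝ × ℝ => η q.1 q.2) (x,y),
            Dv (1,0) (fun q : ℝ × ℝ => η q.1 q.2) (x,y)
              + p * Dv (0,1) (fun q : ℝ × ℝ => η q.1 q.2) (x,y)) =
        Dv (1,0) (Dv (1,0) (fun q : ℝ × ℝ => η q.1 q.2)) (x,y)
          + 2*p*Dv (1,0) (Dv (0,1) (fun q : ℝ × ℝ => η q.1 q.2)) (x,y)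
          + p^2 * Dv (0,1) (Dv (0,1) (fun q : ℝ × ℝ => η q.1 q.2)) (x,y)
          + (fun q : ℝ × ℝ × ℝ => f q.1 q.2.1 q.2.2) (x,y,p)
              * Dv (0,1) (fun q : ℝ × ℝ => η q.1 q.2) (x,y) := by
    intro x y p
    have h := hpde x y p
    simp only [he1, he2, eX_eq_s11 hH1, eX_eq_s11 hH2, eY_eq_s11 hH2] at h
    exact h
  have hkey := key C (fun q : ℝ × ℝ × ℝ => f q.1 q.2.1 q.2.2)
    (fun q : ℝ × ℝ × ℝ => fbar q.1 q.2.1 q.2.2) (fun q : ℝ × ℝ => η q.1 q.2)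
    hf hfbar hη hB' hpde'
  intro x y p
  have hk := hkey x y p
  simp only [Ninv, c1, c2, c3, d1, d2, d3, he1, he2,
    pY_eq_s11 hFb3, pX_eq_s11 hFb33, pY_eq_s11 hFb33, pY_eq_s11 hF3, pX_eq_s11 hF33, pY_eq_s11 hF33]
  exact hk
end

section
/- Let C ∈ ℝ, let f be a smooth real-valued function of three variables (x,y,p), and let η be a smooth function of (x,y) with ∂η/∂y ≠ 0. Suppose that for all (x,y,p): η_xx + 2p·η_xy + p²·η_yy + f(x,y,p)·η_y = (x + C)·η(x,y). Then for all (x,y,p): η_yy(x,y) = -(1/2)·f_{pp}(x,y,p)·η_y(x,y) and η_xy(x,y) = -(1/2)·f_p(x,y,p)·η_y(x,y) + (1/2)·p·f_{pp}(x,y,p)·η_y(x,y). -/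
/-- if `x̄ = x + C`, `ȳ = η(x,y)` maps `y'' = f(x,y,y')` to the
Airy equation `ȳ'' = x̄ ȳ`, then `η_yy = -(1/2) f_pp η_y` and
`η_xy = -(1/2) f_p η_y + (1/2) p f_pp η_y`. -/
theorem statement13 (C : ℝ) (f : ℝ → ℝ → ℝ → ℝ) (η : ℝ → ℝ → ℝ)
    (hf : ContDiff ℝ (⊤ : ℕ∞) (fun q : ℝ × ℝ × ℝ => f q.1 q.2.1 q.2.2))
    (hη : ContDiff ℝ (⊤ : ℕ∞) (fun q : ℝ × ℝ => η q.1 q.2))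
    (hηy : ∀ x y : ℝ, eY η x y ≠ 0)
    (hpde : ∀ x y p : ℝ,
      eX (eX η) x y + 2 * p * eX (eY η) x y + p^2 * eY (eY η) x y
        + f x y p * eY η x y = (x + C) * η x y) :
    ∀ x y p : ℝ,
      eY (eY η) x y = -(1/2) * pP (pP f) x y p * eY η x y ∧
      eX (eY η) x y = -(1/2) * pP f x y p * eY η x y
        + (1/2) * p * pP (pP f) x y p * eY η x y := by
  intro x y p
  set A := eX (eX η) x y with hA
  set B := eX (eY η) x y with hB
  set D := eY (eY η) x y with hD
  set E := eY η x y with hE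
  set K := (x + C) * η x y with hK
  have hE0 : E ≠ 0 := hηy x y
  have hg : ∀ q : ℝ, f x y q = (K - A - 2 * B * q - D * q ^ 2) / E := by
    intro q
    have h := hpde x y q
    field_simp
    linarith
  have hfd : ∀ t : ℝ, pP f x y t = (-(2 * B) - 2 * D * t) / E := by
    intro t
    have hfun : (fun q => f x y q) = (fun q : ℝ => (K - A - 2 * B * q - D * q ^ 2) / E) :=
      funext hg
    have hq : HasDerivAt (fun q : ℝ => K - A - 2 * B * q - D * q ^ 2) (-(2 * B) - 2 * D * t) t := by
      have h1 : HasDerivAt (fun q : ℝ => K - A - 2 * B * q - D * q ^ 2)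
          (0 - 2 * B * 1 - D * (2 * t ^ 1)) t := by
        exact ((hasDerivAt_const t (K - A)).sub ((hasDerivAt_id t).const_mul (2 * B))).sub
          ((hasDerivAt_pow 2 t).const_mul D)
      convert h1 using 1
      ring
    have := (hq.div_const E).deriv
    rw [pP, hfun, this]
  have hfdd : pP (pP f) x y p = -(2 * D) / E := by
    have hfun : (fun t => pP f x y t) = (fun t : ℝ => (-(2 * B) - 2 * D * t) / E) :=
      funext hfd
    have hq : HasDerivAt (fun t : ℝ => -(2 * B) - 2 * D * t) (-(2 * D)) p := by
      have h1 : HasDerivAt (fun t : ℝ => -(2 * B) - 2 * D * t) (0 - 2 * D * 1) p :=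
        (hasDerivAt_const p (-(2 * B))).sub ((hasDerivAt_id p).const_mul (2 * D))
      convert h1 using 1
      ring
    rw [pP, hfun, (hq.div_const E).deriv]
  constructor
  · rw [hfdd]
    field_simp
  · rw [hfdd, hfd p]
    field_simp
    ring
end

section
/- Let f be a smooth real-valued function of three variables (x,y,p), and let η be a smooth function of (x,y) with ∂η/∂y ≠ 0. Suppose that for all (x,y,p): η_xx + 2p·η_xy + p²·η_yy + f(x,y,p)·η_y = η(x,y)³, i.e., the transformation x̄ = x, ȳ = η(x,y) (a transformation of type Φ₁) maps y'' = f(x,y,y') to ȳ'' = ȳ³. Then for all (x,y,p): 12·η(x,y)² = 4·f_y - 2·f_{xp} - 2·f_{pp}·f - 2·p·f_{yp} + (f_p)². -/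
section Machinery

variable {h : ℝ → ℝ → ℝ}

lemma sliceX (hh : ContDiff ℝ (⊤ : ℕ∞) (fun q : ℝ × ℝ => h q.1 q.2)) (x y : ℝ) : HasDerivAt (fun t => h t y) (eX h x y) x := by
  have hdiff : DifferentiableAt ℝ (fun t => h t y) x := by
    have : (fun t => h t y) = (fun q : ℝ × ℝ => h q.1 q.2) ∘ (fun t => (t, y)) := rfl
    rw [this]
    exact ((hh.differentiable (by simp)) (x, y)).comp x
      (differentiableAt_id.prodMk (differentiableAt_const _))
  exact hdiff.hasDerivAt

lemma sliceY (hh : ContDiff ℝ (⊤ : ℕ∞) (fun q : ℝ × ℝ => h q.1 q.2)) (x y : ℝ) : HasDerivAt (fun t => h x t) (eY h x y) y := by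
  have hdiff : DifferentiableAt ℝ (fun t => h x t) y := by
    have : (fun t => h x t) = (fun q : ℝ × ℝ => h q.1 q.2) ∘ (fun t => (x, t)) := rfl
    rw [this]
    exact ((hh.differentiable (by simp)) (x, y)).comp y
      ((differentiableAt_const _).prodMk differentiableAt_id)
  exact hdiff.hasDerivAt

lemma eX_eq_fderiv (hh : ContDiff ℝ (⊤ : ℕ∞) (fun q : ℝ × ℝ => h q.1 q.2)) (x y : ℝ) :
    eX h x y = fderiv ℝ (fun q : ℝ × ℝ => h q.1 q.2) (x, y) (1, 0) := by
  have hline : HasDerivAt (fun t : ℝ => ((t, y) : ℝ × ℝ)) (1, 0) x :=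
    (hasDerivAt_id x).prodMk (hasDerivAt_const x y)
  have hG : HasFDerivAt (fun q : ℝ × ℝ => h q.1 q.2)
      (fderiv ℝ (fun q : ℝ × ℝ => h q.1 q.2) (x, y)) (x, y) :=
    ((hh.differentiable (by simp)) (x, y)).hasFDerivAt
  have key : HasDerivAt (fun t => h t y)
      (fderiv ℝ (fun q : ℝ × ℝ => h q.1 q.2) (x, y) (1, 0)) x :=
    hG.comp_hasDerivAt (l := fun q : ℝ × ℝ => h q.1 q.2) x hline
  exact key.deriv

lemma eY_eq_fderiv (hh : ContDiff ℝ (⊤ : ℕ∞) (fun q : ℝ × ℝ => h q.1 q.2)) (x y : ℝ) :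
    eY h x y = fderiv ℝ (fun q : ℝ × ℝ => h q.1 q.2) (x, y) (0, 1) := by
  have hline : HasDerivAt (fun t : ℝ => ((x, t) : ℝ × ℝ)) (0, 1) y :=
    (hasDerivAt_const y x).prodMk (hasDerivAt_id y)
  have hG : HasFDerivAt (fun q : ℝ × ℝ => h q.1 q.2)
      (fderiv ℝ (fun q : ℝ × ℝ => h q.1 q.2) (x, y)) (x, y) :=
    ((hh.differentiable (by simp)) (x, y)).hasFDerivAt
  have key : HasDerivAt (fun t => h x t)
      (fderiv ℝ (fun q : ℝ × ℝ => h q.1 q.2) (x, y) (0, 1)) y :=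
    hG.comp_hasDerivAt y hline
  exact key.deriv

lemma contDiff_eX (hh : ContDiff ℝ (⊤ : ℕ∞) (fun q : ℝ × ℝ => h q.1 q.2)) : ContDiff ℝ (⊤ : ℕ∞) (fun q : ℝ × ℝ => eX h q.1 q.2) := by
  have : (fun q : ℝ × ℝ => eX h q.1 q.2)
      = fun q : ℝ × ℝ => fderiv ℝ (fun q : ℝ × ℝ => h q.1 q.2) q (1, 0) := by
    funext q
    exact eX_eq_fderiv hh q.1 q.2
  rw [this]
  exact (hh.fderiv_right (by simp)).clm_apply contDiff_const

lemma contDiff_eY (hh : ContDiff ℝ (⊤ : ℕ∞) (fun q : ℝ × ℝ => h q.1 q.2)) : ContDiff ℝ (⊤ : ℕ∞) (fun q : ℝ × ℝ => eY h q.1 q.2) := by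
  have : (fun q : ℝ × ℝ => eY h q.1 q.2)
      = fun q : ℝ × ℝ => fderiv ℝ (fun q : ℝ × ℝ => h q.1 q.2) q (0, 1) := by
    funext q
    exact eY_eq_fderiv hh q.1 q.2
  rw [this]
  exact (hh.fderiv_right (by simp)).clm_apply contDiff_const

lemma swapXY (hh : ContDiff ℝ (⊤ : ℕ∞) (fun q : ℝ × ℝ => h q.1 q.2)) (x y : ℝ) : eX (eY h) x y = eY (eX h) x y := by
  set G : ℝ × ℝ → ℝ := fun q => h q.1 q.2 with hG
  set F'' : ℝ × ℝ →L[ℝ] ℝ × ℝ →L[ℝ] ℝ := fderiv ℝ (fderiv ℝ G) (x, y) with hF''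
  have hdG : ∀ z, HasFDerivAt G (fderiv ℝ G z) z :=
    fun z => ((hh.differentiable (by simp)) z).hasFDerivAt
  have hdF' : HasFDerivAt (fderiv ℝ G) F'' (x, y) :=
    (((hh.fderiv_right (m := (⊤ : ℕ∞)) (by simp)).differentiable (by simp)) (x, y)).hasFDerivAt
  have hsym := second_derivative_symmetric hdG hdF' ((1 : ℝ), (0 : ℝ)) ((0 : ℝ), (1 : ℝ))
  -- eX (eY h) x y = F'' (1,0) (0,1)
  have h1 : eX (eY h) x y = F'' (1, 0) (0, 1) := by
    have hline : HasDerivAt (fun t : ℝ => ((t, y) : ℝ × ℝ)) (1, 0) x :=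
      (hasDerivAt_id x).prodMk (hasDerivAt_const x y)
    have hcl : HasDerivAt (fun t : ℝ => fderiv ℝ G (t, y)) (F'' (1, 0)) x :=
      hdF'.comp_hasDerivAt x hline
    have happ : HasDerivAt (fun t : ℝ => fderiv ℝ G (t, y) (0, 1))
        (F'' (1, 0) (0, 1)) x := by
      have := hcl.clm_apply (hasDerivAt_const x ((0 : ℝ), (1 : ℝ)))
      simpa using this
    have hfun : (fun t : ℝ => eY h t y) = fun t : ℝ => fderiv ℝ G (t, y) (0, 1) := by
      funext t; exact eY_eq_fderiv hh t y
    show deriv (fun t : ℝ => eY h t y) x = _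
    rw [hfun]
    exact happ.deriv
  have h2 : eY (eX h) x y = F'' (0, 1) (1, 0) := by
    have hline : HasDerivAt (fun t : ℝ => ((x, t) : ℝ × ℝ)) (0, 1) y :=
      (hasDerivAt_const y x).prodMk (hasDerivAt_id y)
    have hcl : HasDerivAt (fun t : ℝ => fderiv ℝ G (x, t)) (F'' (0, 1)) y :=
      hdF'.comp_hasDerivAt y hline
    have happ : HasDerivAt (fun t : ℝ => fderiv ℝ G (x, t) (1, 0))
        (F'' (0, 1) (1, 0)) y := by
      have := hcl.clm_apply (hasDerivAt_const y ((1 : ℝ), (0 : ℝ)))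
      simpa using this
    have hfun : (fun t : ℝ => eX h x t) = fun t : ℝ => fderiv ℝ G (x, t) (1, 0) := by
      funext t; exact eX_eq_fderiv hh x t
    show deriv (fun t : ℝ => eX h x t) y = _
    rw [hfun]
    exact happ.deriv
  rw [h1, h2, hsym]

end Machinery

/-- if `x̄ = x`, `ȳ = η(x,y)` (a Φ₁-transformation) maps
`y'' = f(x,y,y')` to `ȳ'' = ȳ³`, then
`12 η² = 4 f_y - 2 f_xp - 2 f_pp f - 2 p f_yp + f_p²`. -/
theorem statement14 (f : ℝ → ℝ → ℝ → ℝ) (η : ℝ → ℝ → ℝ)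
    (hf : ContDiff ℝ (⊤ : ℕ∞) (fun q : ℝ × ℝ × ℝ => f q.1 q.2.1 q.2.2))
    (hη : ContDiff ℝ (⊤ : ℕ∞) (fun q : ℝ × ℝ => η q.1 q.2))
    (hηy : ∀ x y : ℝ, eY η x y ≠ 0)
    (hpde : ∀ x y p : ℝ,
      eX (eX η) x y + 2 * p * eX (eY η) x y + p^2 * eY (eY η) x y
        + f x y p * eY η x y = (η x y)^3) :
    ∀ x y p : ℝ,
      12 * (η x y)^2 =
        4 * pY f x y p - 2 * pX (pP f) x y p - 2 * pP (pP f) x y p * f x y p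
          - 2 * p * pY (pP f) x y p + (pP f x y p)^2 := by
  have hA : ContDiff ℝ (⊤ : ℕ∞) (fun q : ℝ × ℝ => eY η q.1 q.2) := contDiff_eY hη
  have hE2 : ContDiff ℝ (⊤ : ℕ∞) (fun q : ℝ × ℝ => eX (eX η) q.1 q.2) :=
    contDiff_eX (contDiff_eX hη)
  have hF2 : ContDiff ℝ (⊤ : ℕ∞) (fun q : ℝ × ℝ => eX (eY η) q.1 q.2) :=
    contDiff_eX (contDiff_eY hη)
  have hG2 : ContDiff ℝ (⊤ : ℕ∞) (fun q : ℝ × ℝ => eY (eY η) q.1 q.2) :=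
    contDiff_eY (contDiff_eY hη)
  -- explicit formula for f
  have hfval : ∀ x y p : ℝ, f x y p =
      ((η x y)^3 - eX (eX η) x y - 2 * eX (eY η) x y * p - eY (eY η) x y * p^2)
        * (eY η x y)⁻¹ := by
    intro x y p
    have h0 := hpde x y p
    have ha := hηy x y
    field_simp
    linear_combination h0
  -- formula for pP f
  have hpPf : ∀ x y p : ℝ, pP f x y p =
      (-(2 * eX (eY η) x y) - 2 * eY (eY η) x y * p) * (eY η x y)⁻¹ := by
    intro x y p
    have hfun : (fun t => f x y t) = fun t : ℝ =>
        ((η x y)^3 - eX (eX η) x y - 2 * eX (eY η) x y * t - eY (eY η) x y * t^2)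
          * (eY η x y)⁻¹ := funext fun t => hfval x y t
    have hder : HasDerivAt (fun t : ℝ =>
        ((η x y)^3 - eX (eX η) x y - 2 * eX (eY η) x y * t - eY (eY η) x y * t^2)
          * (eY η x y)⁻¹)
        ((0 - 2 * eX (eY η) x y * 1 - eY (eY η) x y * (((2:ℕ):ℝ) * p ^ (2-1)))
          * (eY η x y)⁻¹) p :=
      (((hasDerivAt_const p ((η x y)^3 - eX (eX η) x y)).sub
        ((hasDerivAt_id p).const_mul (2 * eX (eY η) x y))).sub
        ((hasDerivAt_pow 2 p).const_mul (eY (eY η) x y))).mul_const ((eY η x y)⁻¹)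
    show deriv (fun t => f x y t) p = _
    rw [hfun, hder.deriv]
    push_cast
    ring
  intro x y p
  have ha := hηy x y
  -- pP (pP f)
  have h1 : pP (pP f) x y p = -(2 * eY (eY η) x y) * (eY η x y)⁻¹ := by
    have hfun : (fun t => pP f x y t) = fun t : ℝ =>
        (-(2 * eX (eY η) x y) - 2 * eY (eY η) x y * t) * (eY η x y)⁻¹ :=
      funext fun t => hpPf x y t
    have hder : HasDerivAt (fun t : ℝ =>
        (-(2 * eX (eY η) x y) - 2 * eY (eY η) x y * t) * (eY η x y)⁻¹)
        ((0 - 2 * eY (eY η) x y * 1) * (eY η x y)⁻¹) p :=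
      ((hasDerivAt_const p (-(2 * eX (eY η) x y))).sub
        ((hasDerivAt_id p).const_mul (2 * eY (eY η) x y))).mul_const ((eY η x y)⁻¹)
    show deriv (fun t => pP f x y t) p = _
    rw [hfun, hder.deriv]
    ring
  -- pX (pP f)
  have h2 : pX (pP f) x y p =
      (-(2 * eX (eX (eY η)) x y) - 2 * eX (eY (eY η)) x y * p) * (eY η x y)⁻¹
      + (-(2 * eX (eY η) x y) - 2 * eY (eY η) x y * p)
          * (-(eX (eY η) x y) / eY η x y ^ 2) := by
    have hfun : (fun t => pP f t y p) = fun t : ℝ =>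
        (-(2 * eX (eY η) t y) - 2 * eY (eY η) t y * p) * (eY η t y)⁻¹ :=
      funext fun t => hpPf t y p
    have hb := sliceX hF2 x y
    have hc := sliceX hG2 x y
    have hav := sliceX hA x y
    have hder : HasDerivAt (fun t : ℝ =>
        (-(2 * eX (eY η) t y) - 2 * eY (eY η) t y * p) * (eY η t y)⁻¹)
        ((-(2 * eX (eX (eY η)) x y) - 2 * eX (eY (eY η)) x y * p) * (eY η x y)⁻¹
          + (-(2 * eX (eY η) x y) - 2 * eY (eY η) x y * p)
              * (-(eX (eY η) x y) / eY η x y ^ 2)) x :=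
      (((hb.const_mul 2).neg).sub ((hc.const_mul 2).mul_const p)).mul
        (hav.inv (hηy x y))
    show deriv (fun t => pP f t y p) x = _
    rw [hfun, hder.deriv]
  -- pY (pP f)
  have h3 : pY (pP f) x y p =
      (-(2 * eY (eX (eY η)) x y) - 2 * eY (eY (eY η)) x y * p) * (eY η x y)⁻¹
      + (-(2 * eX (eY η) x y) - 2 * eY (eY η) x y * p)
          * (-(eY (eY η) x y) / eY η x y ^ 2) := by
    have hfun : (fun t => pP f x t p) = fun t : ℝ =>
        (-(2 * eX (eY η) x t) - 2 * eY (eY η) x t * p) * (eY η x t)⁻¹ :=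
      funext fun t => hpPf x t p
    have hb := sliceY hF2 x y
    have hc := sliceY hG2 x y
    have hav := sliceY hA x y
    have hder : HasDerivAt (fun t : ℝ =>
        (-(2 * eX (eY η) x t) - 2 * eY (eY η) x t * p) * (eY η x t)⁻¹)
        ((-(2 * eY (eX (eY η)) x y) - 2 * eY (eY (eY η)) x y * p) * (eY η x y)⁻¹
          + (-(2 * eX (eY η) x y) - 2 * eY (eY η) x y * p)
              * (-(eY (eY η) x y) / eY η x y ^ 2)) y :=
      (((hb.const_mul 2).neg).sub ((hc.const_mul 2).mul_const p)).mul
        (hav.inv (hηy x y))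
    show deriv (fun t => pP f x t p) y = _
    rw [hfun, hder.deriv]
  -- pY f
  have h4 : pY f x y p =
      (((3:ℕ):ℝ) * η x y ^ (3-1) * eY η x y - eY (eX (eX η)) x y
          - 2 * eY (eX (eY η)) x y * p - eY (eY (eY η)) x y * p^2) * (eY η x y)⁻¹
      + ((η x y)^3 - eX (eX η) x y - 2 * eX (eY η) x y * p - eY (eY η) x y * p^2)
          * (-(eY (eY η) x y) / eY η x y ^ 2) := by
    have hfun : (fun t => f x t p) = fun t : ℝ =>
        ((η x t)^3 - eX (eX η) x t - 2 * eX (eY η) x t * p - eY (eY η) x t * p^2)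
          * (eY η x t)⁻¹ := funext fun t => hfval x t p
    have hu := sliceY hη x y
    have he := sliceY hE2 x y
    have hb := sliceY hF2 x y
    have hc := sliceY hG2 x y
    have hav := sliceY hA x y
    have hder : HasDerivAt (fun t : ℝ =>
        ((η x t)^3 - eX (eX η) x t - 2 * eX (eY η) x t * p - eY (eY η) x t * p^2)
          * (eY η x t)⁻¹)
        ((((3:ℕ):ℝ) * η x y ^ (3-1) * eY η x y - eY (eX (eX η)) x y
            - 2 * eY (eX (eY η)) x y * p - eY (eY (eY η)) x y * p^2) * (eY η x y)⁻¹
          + ((η x y)^3 - eX (eX η) x y - 2 * eX (eY η) x y * p - eY (eY η) x y * p^2)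
              * (-(eY (eY η) x y) / eY η x y ^ 2)) y :=
      ((((hu.pow 3).sub he).sub ((hb.const_mul 2).mul_const p)).sub
        (hc.mul_const (p^2))).mul (hav.inv (hηy x y))
    show deriv (fun t => f x t p) y = _
    rw [hfun, hder.deriv]
  -- mixed partials
  have sw2 : eY (eX (eY η)) x y = eX (eY (eY η)) x y :=
    (swapXY (contDiff_eY hη) x y).symm
  have sw1 : eY (eX (eX η)) x y = eX (eX (eY η)) x y := by
    have hh1 : eY (eX (eX η)) x y = eX (eY (eX η)) x y :=
      (swapXY (contDiff_eX hη) x y).symm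
    have hh2 : eY (eX η) = eX (eY η) :=
      funext fun a => funext fun b => (swapXY hη a b).symm
    rw [hh1, hh2]
  rw [h1, h2, h3, h4, hpPf x y p, hfval x y p, sw1, sw2]
  push_cast
  field_simp
  ring
end

section
/- Let C ∈ ℂ, let Ω ⊆ ℂ² be a nonempty connected open set on which x ≠ 0 and x + C ≠ 0, and let η : Ω → ℂ be holomorphic with ∂η/∂y ≠ 0 on Ω. Suppose that for all (x,y) ∈ Ω and all p ∈ ℂ: η_xx + 2p·η_xy + p²·η_yy + (p/x + 4y²/x³)·η_y = (η_x + p·η_y)/(x + C) + 4·η(x,y)²/(x + C)³. Then C = 0 and η(x,y) = y for all (x,y) ∈ Ω. -/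
/-! Comparing coefficients of `p` in the PDE gives `η_yy = 0`, `2x(x+C) η_xy + C η_y = 0` and a
polynomial form of the `p⁰` equation. The first makes `η(x, y) = b(x) + σ(x) y` near any point
of `Ω`; the `p⁰` equation is then quadratic in `y`. Its `y²` coefficient forces
`x³ σ = (x + C)³`, which together with the `η_xy` equation gives `C = 0`, hence `σ = 1`, and then
its `y` coefficient forces `b = 0`. -/

open Metric Set Filter Topology

theorem eq_zero_of_quadratic_eq_zero_of_three {K : Type*} [Field K] [CharZero K]
    {a b c y ε : K} (hε : ε ≠ 0) (hm : a + b * (y - ε) + c * (y - ε) ^ 2 = 0)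
    (h₀ : a + b * y + c * y ^ 2 = 0) (hp : a + b * (y + ε) + c * (y + ε) ^ 2 = 0) :
    a = 0 ∧ b = 0 ∧ c = 0 := by
  obtain rfl : c = 0 := by
    have : (2 * ε ^ 2) * c = 0 := by linear_combination hp + hm - 2 * h₀
    simpa [hε] using this
  obtain rfl : b = 0 := by
    have : (2 * ε) * b = 0 := by linear_combination hp - hm
    simpa [hε] using this
  exact ⟨by simpa using h₀, rfl, rfl⟩

theorem reid_pde_coeffs {K : Type*} [Field K] [CharZero K] {x y C w wx wy wxx wxy wyy : K}
    (hx : x ≠ 0) (hxC : x + C ≠ 0)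
    (h : ∀ p : K, wxx + 2 * p * wxy + p ^ 2 * wyy + (p / x + 4 * y ^ 2 / x ^ 3) * wy
      = (wx + p * wy) / (x + C) + 4 * w ^ 2 / (x + C) ^ 3) :
    wyy = 0 ∧ 2 * x * (x + C) * wxy + C * wy = 0 ∧
      x ^ 3 * (x + C) ^ 3 * wxx + 4 * y ^ 2 * (x + C) ^ 3 * wy
        = x ^ 3 * (x + C) ^ 2 * wx + 4 * x ^ 3 * w ^ 2 := by
  obtain ⟨h₀, h₁, h₂⟩ := eq_zero_of_quadratic_eq_zero_of_three (y := 0) one_ne_zero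
    (a := wxx + 4 * y ^ 2 / x ^ 3 * wy - wx / (x + C) - 4 * w ^ 2 / (x + C) ^ 3)
    (b := 2 * wxy + wy / x - wy / (x + C)) (c := wyy)
    (by linear_combination h (-1)) (by linear_combination h 0) (by linear_combination h 1)
  refine ⟨h₂, ?_, ?_⟩
  · field_simp at h₁
    linear_combination h₁
  · field_simp at h₀
    linear_combination h₀

theorem reid_affine_coeffs {K : Type*} [Field K] [CharZero K]
    {x C b b' b'' s s' s'' y ε : K} (hε : ε ≠ 0)
    (h : ∀ t ∈ ({y - ε, y, y + ε} : Set K), x ^ 3 * (x + C) ^ 3 * (b'' + s'' * t)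
      + 4 * t ^ 2 * (x + C) ^ 3 * s
        = x ^ 3 * (x + C) ^ 2 * (b' + s' * t) + 4 * x ^ 3 * (b + s * t) ^ 2) :
    (x + C) ^ 3 * s = x ^ 3 * s ^ 2 ∧
      x ^ 3 * (x + C) ^ 3 * s'' - x ^ 3 * (x + C) ^ 2 * s' - 8 * x ^ 3 * b * s = 0 := by
  obtain ⟨-, h₁, h₂⟩ := eq_zero_of_quadratic_eq_zero_of_three (y := y) hε
    (a := x ^ 3 * (x + C) ^ 3 * b'' - x ^ 3 * (x + C) ^ 2 * b' - 4 * x ^ 3 * b ^ 2)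
    (b := x ^ 3 * (x + C) ^ 3 * s'' - x ^ 3 * (x + C) ^ 2 * s' - 8 * x ^ 3 * b * s)
    (c := 4 * (x + C) ^ 3 * s - 4 * x ^ 3 * s ^ 2)
    (by linear_combination h (y - ε) (by simp)) (by linear_combination h y (by simp))
    (by linear_combination h (y + ε) (by simp))
  exact ⟨by linear_combination h₂ / 4, h₁⟩

theorem exists_ne_zero_insert_subset_ball {𝕜 : Type*} [NontriviallyNormedField 𝕜] (y : 𝕜)
    {r : ℝ} (hr : 0 < r) : ∃ ε : 𝕜, ε ≠ 0 ∧ ({y - ε, y, y + ε} : Set 𝕜) ⊆ ball y r := by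
  obtain ⟨ε, hε₀, hεr⟩ := NormedField.exists_norm_lt 𝕜 hr
  refine ⟨ε, norm_pos_iff.mp hε₀, ?_⟩
  simp [insert_subset_iff, dist_eq_norm, hr, hεr]

theorem IsOpen.exists_eqOn_affine_of_deriv_deriv_eq_zero {𝕜 G : Type*} [RCLike 𝕜]
    [NormedAddCommGroup G] [NormedSpace 𝕜 G] {f : 𝕜 → G} {s : Set 𝕜} (hs : IsOpen s)
    (hs' : IsPreconnected s) (hf : DifferentiableOn 𝕜 f s) (hf' : DifferentiableOn 𝕜 (deriv f) s)
    (hf'' : EqOn (deriv (deriv f)) 0 s) : ∃ m c, EqOn f (fun t => t • m + c) s := by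
  obtain ⟨m, hm⟩ := hs.exists_is_const_of_deriv_eq_zero hs' hf' hf''
  refine ⟨m, hs.exists_eq_add_of_deriv_eq hs' hf (g := fun t => t • m)
    (differentiableOn_id.smul_const m) fun t ht => ?_⟩
  rw [hm t ht, ((hasDerivAt_id' t).smul_const m).deriv, one_smul]

theorem DifferentiableOn.analyticOnNhd_comp {E F : Type*} [NormedAddCommGroup E]
    [NormedSpace ℂ E] [CompleteSpace E] [NormedAddCommGroup F] [NormedSpace ℂ F]
    {η : F → E} {Ω : Set F} {g : ℂ → F} (hη : DifferentiableOn ℂ η Ω) (hΩ : IsOpen Ω)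
    (hg : Differentiable ℂ g) : AnalyticOnNhd ℂ (η ∘ g) (g ⁻¹' Ω) :=
  (hη.comp hg.differentiableOn (mapsTo_preimage g Ω)).analyticOnNhd (hΩ.preimage hg.continuous)

def affineInY (b σ : ℂ → ℂ) (q : ℂ × ℂ) : ℂ :=
  b q.1 + σ q.1 * q.2

section affineInY

variable {η : ℂ × ℂ → ℂ} {b σ : ℂ → ℂ} {U V : Set ℂ}

theorem eqOn_cpX_of_eqOn_affineInY (hU : IsOpen U) (hb : DifferentiableOn ℂ b U)
    (hσ : DifferentiableOn ℂ σ U) (h : EqOn η (affineInY b σ) (U ×ˢ V)) :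
    EqOn (cpX η) (affineInY (deriv b) (deriv σ)) (U ×ˢ V) := by
  rintro ⟨x, t⟩ ⟨hx, ht⟩
  have hloc : (fun u => η (u, t)) =ᶠ[𝓝 x] fun u => b u + σ u * t :=
    eventually_of_mem (hU.mem_nhds hx) fun u hu => h ⟨hu, ht⟩
  exact hloc.deriv_eq.trans ((hb.differentiableAt (hU.mem_nhds hx)).hasDerivAt.add
    ((hσ.differentiableAt (hU.mem_nhds hx)).hasDerivAt.mul_const t)).deriv

theorem eqOn_cpY_of_eqOn_affineInY (hV : IsOpen V) (h : EqOn η (affineInY b σ) (U ×ˢ V)) :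
    EqOn (cpY η) (affineInY σ 0) (U ×ˢ V) := by
  rintro ⟨x, t⟩ ⟨hx, ht⟩
  have hloc : (fun s => η (x, s)) =ᶠ[𝓝 t] fun s => b x + σ x * s :=
    eventually_of_mem (hV.mem_nhds ht) fun s hs => h ⟨hx, hs⟩
  simp only [cpY, affineInY, Pi.zero_apply, zero_mul, add_zero]
  simpa using hloc.deriv_eq.trans (((hasDerivAt_id' t).const_mul (σ x)).const_add (b x)).deriv

end affineInY

theorem exists_eqOn_affineInY {Ω : Set (ℂ × ℂ)} {η : ℂ × ℂ → ℂ} (hΩ : IsOpen Ω)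
    (hη : DifferentiableOn ℂ η Ω) (hyy : ∀ q ∈ Ω, cpY (cpY η) q = 0) {x₀ y₀ : ℂ}
    (hq₀ : (x₀, y₀) ∈ Ω) :
    ∃ r > 0, ball x₀ r ×ˢ ball y₀ r ⊆ Ω ∧ ∃ b σ : ℂ → ℂ, AnalyticOnNhd ℂ b (ball x₀ r) ∧
      AnalyticOnNhd ℂ σ (ball x₀ r) ∧ EqOn η (affineInY b σ) (ball x₀ r ×ˢ ball y₀ r) := by
  obtain ⟨r, hr, hsub⟩ := Metric.isOpen_iff.mp hΩ _ hq₀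
  rw [← ball_prod_same] at hsub
  obtain ⟨ε, hε, hε_mem⟩ := exists_ne_zero_insert_subset_ball y₀ hr
  have hy₀ : y₀ ∈ ball y₀ r := hε_mem (by simp)
  have hy₁ : y₀ + ε ∈ ball y₀ r := hε_mem (by simp)
  have hhor : ∀ t ∈ ball y₀ r, AnalyticOnNhd ℂ (fun u => η (u, t)) (ball x₀ r) := fun t ht =>
    (hη.analyticOnNhd_comp hΩ (differentiable_id.prodMk (differentiable_const t))).mono
      fun u hu => hsub ⟨hu, ht⟩
  -- the slope of `t ↦ η (u, t)`, written as a difference quotient so that it is visibly analytic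
  set σ : ℂ → ℂ := fun u => (η (u, y₀ + ε) - η (u, y₀)) / ε
  have hσ : AnalyticOnNhd ℂ σ (ball x₀ r) := ((hhor _ hy₁).sub (hhor _ hy₀)).div_const
  refine ⟨r, hr, hsub, fun u => η (u, y₀) - σ u * y₀, σ,
    (hhor _ hy₀).sub (hσ.mul analyticOnNhd_const), hσ, ?_⟩
  rintro ⟨x, t⟩ ⟨hx, ht⟩
  have hvert : AnalyticOnNhd ℂ (fun s => η (x, s)) (ball y₀ r) :=
    (hη.analyticOnNhd_comp hΩ ((differentiable_const x).prodMk differentiable_id)).mono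
      fun s hs => hsub ⟨hx, hs⟩
  obtain ⟨m, c, hmc⟩ := isOpen_ball.exists_eqOn_affine_of_deriv_deriv_eq_zero
    (convex_ball y₀ r).isPreconnected hvert.differentiableOn hvert.deriv.differentiableOn
    fun s hs => hyy (x, s) (hsub ⟨hx, hs⟩)
  simp only [affineInY, σ, hmc ht, hmc hy₀, hmc hy₁, smul_eq_mul]
  field_simp
  ring

theorem reid_affine_system_solution {C x₀ β : ℂ} {σ : ℂ → ℂ} {U : Set ℂ} (hU : U ∈ 𝓝 x₀)
    (hσ : DifferentiableAt ℂ σ x₀) (hU₀ : ∀ x ∈ U, x ≠ 0) (hσ_ne : ∀ x ∈ U, σ x ≠ 0)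
    (hquad : ∀ x ∈ U, (x + C) ^ 3 * σ x = x ^ 3 * σ x ^ 2)
    (hE₂ : 2 * x₀ * (x₀ + C) * deriv σ x₀ + C * σ x₀ = 0)
    (hlin : x₀ ^ 3 * (x₀ + C) ^ 3 * deriv (deriv σ) x₀ - x₀ ^ 3 * (x₀ + C) ^ 2 * deriv σ x₀
      - 8 * x₀ ^ 3 * β * σ x₀ = 0) :
    C = 0 ∧ σ x₀ = 1 ∧ β = 0 := by
  have hx₀ : x₀ ∈ U := mem_of_mem_nhds hU
  have hσ_eq : ∀ x ∈ U, x ^ 3 * σ x = (x + C) ^ 3 := fun x hx =>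
    mul_right_cancel₀ (hσ_ne x hx) (by linear_combination -hquad x hx)
  have hσ' : 3 * x₀ ^ 2 * σ x₀ + x₀ ^ 3 * deriv σ x₀ = 3 * (x₀ + C) ^ 2 := by
    have hlhs := (hasDerivAt_pow 3 x₀).mul hσ.hasDerivAt
    have hrhs := ((hasDerivAt_id' x₀).add_const C).pow 3
    simpa using hlhs.unique (hrhs.congr_of_eventuallyEq (eventually_of_mem hU hσ_eq))
  obtain rfl : C = 0 := by
    -- eliminate `σ x₀` and `deriv σ x₀`
    have : C * (x₀ + C) ^ 3 = 0 := by
      linear_combination ((C - 6 * (x₀ + C)) / 5) * hσ_eq x₀ hx₀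
        + (2 * x₀ * (x₀ + C) / 5) * hσ' - (x₀ ^ 3 / 5) * hE₂
    have hx₀C : (x₀ + C) ^ 3 ≠ 0 :=
      hσ_eq x₀ hx₀ ▸ mul_ne_zero (pow_ne_zero 3 (hU₀ x₀ hx₀)) (hσ_ne x₀ hx₀)
    exact (mul_eq_zero.mp this).resolve_right hx₀C
  have hσ_one : σ =ᶠ[𝓝 x₀] fun _ => 1 := eventually_of_mem hU fun x hx =>
    mul_left_cancel₀ (pow_ne_zero 3 (hU₀ x hx)) (by linear_combination hσ_eq x hx)
  have hσ₁ : deriv σ x₀ = 0 := by simpa using hσ_one.deriv_eq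
  have hσ₂ : deriv (deriv σ) x₀ = 0 := by simpa using hσ_one.deriv.deriv_eq
  rw [hσ₁, hσ₂, hσ_one.eq_of_nhds] at hlin
  exact ⟨rfl, hσ_one.eq_of_nhds, by simpa [hU₀ x₀ hx₀] using hlin⟩

theorem reid_symmetry_local {C : ℂ} {Ω : Set (ℂ × ℂ)} (hΩo : IsOpen Ω)
    (hx0 : ∀ q ∈ Ω, q.1 ≠ 0) (hxC : ∀ q ∈ Ω, q.1 + C ≠ 0)
    {η : ℂ × ℂ → ℂ} (hη : DifferentiableOn ℂ η Ω) (hηy : ∀ q ∈ Ω, cpY η q ≠ 0)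
    (hpde : ∀ q ∈ Ω, ∀ p : ℂ,
      cpX (cpX η) q + 2 * p * cpX (cpY η) q + p^2 * cpY (cpY η) q
        + (p / q.1 + 4 * q.2^2 / q.1^3) * cpY η q
      = (cpX η q + p * cpY η q) / (q.1 + C) + 4 * (η q)^2 / (q.1 + C)^3)
    {x₀ y₀ : ℂ} (hq₀ : (x₀, y₀) ∈ Ω) : C = 0 ∧ η (x₀, y₀) = y₀ := by
  have hE := fun q hq => reid_pde_coeffs (hx0 q hq) (hxC q hq) (hpde q hq)
  obtain ⟨r, hr, hsub, b, σ, hb, hσ, hη_eq⟩ :=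
    exists_eqOn_affineInY hΩo hη (fun q hq => (hE q hq).1) hq₀
  have hηx := eqOn_cpX_of_eqOn_affineInY isOpen_ball hb.differentiableOn hσ.differentiableOn hη_eq
  have hηxx := eqOn_cpX_of_eqOn_affineInY isOpen_ball hb.deriv.differentiableOn
    hσ.deriv.differentiableOn hηx
  have hηy_eq := eqOn_cpY_of_eqOn_affineInY isOpen_ball hη_eq
  have hηxy := eqOn_cpX_of_eqOn_affineInY isOpen_ball hσ.differentiableOn
    (differentiableOn_const 0) hηy_eq
  obtain ⟨ε, hε, hε_mem⟩ := exists_ne_zero_insert_subset_ball y₀ hr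
  have hy₀ : y₀ ∈ ball y₀ r := mem_ball_self hr
  have hx₀ : x₀ ∈ ball x₀ r := mem_ball_self hr
  have hcoef : ∀ x ∈ ball x₀ r, (x + C) ^ 3 * σ x = x ^ 3 * σ x ^ 2 ∧
      x ^ 3 * (x + C) ^ 3 * deriv (deriv σ) x - x ^ 3 * (x + C) ^ 2 * deriv σ x
        - 8 * x ^ 3 * b x * σ x = 0 := by
    intro x hx
    refine reid_affine_coeffs (y := y₀) (b' := deriv b x) (b'' := deriv (deriv b) x) hε
      fun t ht => ?_
    have hxt := mk_mem_prod hx (hε_mem ht)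
    have h := (hE (x, t) (hsub hxt)).2.2
    rw [hηxx hxt, hηy_eq hxt, hηx hxt, hη_eq hxt] at h
    simpa [affineInY] using h
  have hσ_ne : ∀ x ∈ ball x₀ r, σ x ≠ 0 := fun x hx => by
    simpa [hηy_eq (mk_mem_prod hx hy₀), affineInY] using hηy _ (hsub (mk_mem_prod hx hy₀))
  have hE₂ : 2 * x₀ * (x₀ + C) * deriv σ x₀ + C * σ x₀ = 0 := by
    simpa [hηxy (mk_mem_prod hx₀ hy₀), hηy_eq (mk_mem_prod hx₀ hy₀), affineInY] using (hE _ hq₀).2.1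
  obtain ⟨hC, hσ₀, hb₀⟩ := reid_affine_system_solution (isOpen_ball.mem_nhds hx₀)
    (hσ x₀ hx₀).differentiableAt (fun x hx => hx0 _ (hsub (mk_mem_prod hx hy₀))) hσ_ne
    (fun x hx => (hcoef x hx).1) hE₂ (hcoef x₀ hx₀).2
  refine ⟨hC, ?_⟩
  simpa [affineInY, hb₀, hσ₀] using hη_eq (mk_mem_prod hx₀ hy₀)

/-- The Φ₃-symmetry pseudo-group of Reid's equation
`y'' = y'/x + 4y²/x³` is trivial: any symmetry `x̄ = x + C`, `ȳ = η(x,y)` has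
`C = 0` and `η(x,y) = y`. -/
theorem statement15 (C : ℂ) (Ω : Set (ℂ × ℂ)) (hΩo : IsOpen Ω) (hΩc : IsConnected Ω)
    (hx0 : ∀ q ∈ Ω, q.1 ≠ 0) (hxC : ∀ q ∈ Ω, q.1 + C ≠ 0)
    (η : ℂ × ℂ → ℂ) (hη : DifferentiableOn ℂ η Ω)
    (hηy : ∀ q ∈ Ω, cpY η q ≠ 0)
    (hpde : ∀ q ∈ Ω, ∀ p : ℂ,
      cpX (cpX η) q + 2 * p * cpX (cpY η) q + p^2 * cpY (cpY η) q
        + (p / q.1 + 4 * q.2^2 / q.1^3) * cpY η q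
      = (cpX η q + p * cpY η q) / (q.1 + C) + 4 * (η q)^2 / (q.1 + C)^3) :
    C = 0 ∧ ∀ q ∈ Ω, η q = q.2 := by
  obtain ⟨q₀, hq₀⟩ := hΩc.nonempty
  exact ⟨(reid_symmetry_local hΩo hx0 hxC hη hηy hpde hq₀).1,
    fun q hq => (reid_symmetry_local hΩo hx0 hxC hη hηy hpde hq).2⟩
end
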